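/- Let N be a 1-nested phylogenetic network on a finite set X with |X| ≥ 3, let S be a cherry of N with z ∈ S, and suppose S ≠ X. If S is an isolated cherry, then the isolated cherry reduction C̄_{z:S}(N) is a 1-nested phylogenetic network on X − (S − {z}), and otherwise the cherry reduction C_{z:S}(N) is a 1-nested phylogenetic network on X − (S − {z}); in either case the resulting network has Tr equal to Tr(N) with all trinets whose leaf set meets S in a set other than ∅ or {z} removed. -/

import Mathlib

/-!
Common formalization infrastructure for 1-nested phylogenetic networks and trinets
(Huber–Moulton, "Encoding and Constructing 1-Nested Phylogenetic Networks with Trinets").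

Networks are modelled concretely: the vertex set is a finite set of natural numbers,
arcs are a finite set of ordered pairs (so there are no multiple arcs), and leaves are
labelled by themselves (i.e. the leaf set of a network on `X` is literally `X`).
-/

noncomputable section

/-- A finite directed graph with vertex set `verts ⊆ ℕ`, arc set `arcs`
(ordered pairs, no multiple arcs) and a distinguished root vertex. -/
structure Net where
  verts : Finset ℕ
  arcs : Finset (ℕ × ℕ)
  root : ℕ

namespace Net

/-- The arc relation of `N`. -/
def ArcRel (N : Net) (u v : ℕ) : Prop := (u, v) ∈ N.arcs

/-- `v` is reachable from `u` by a directed path in `N`. -/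
def Reach (N : Net) (u v : ℕ) : Prop := Relation.ReflTransGen N.ArcRel u v

/-- The indegree of a vertex. -/
def indeg (N : Net) (v : ℕ) : ℕ := (N.arcs.filter fun a => a.2 = v).card

/-- The outdegree of a vertex. -/
def outdeg (N : Net) (v : ℕ) : ℕ := (N.arcs.filter fun a => a.1 = v).card

/-- A leaf is a vertex of indegree 1 and outdegree 0. -/
def IsLeaf (N : Net) (v : ℕ) : Prop := N.indeg v = 1 ∧ N.outdeg v = 0

/-- `N` is a phylogenetic network on the leaf set `X`: it is a rooted DAG
(no loops and no multiple arcs, a unique source, namely the root), its set of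
leaves is exactly `X`, every tree vertex (a non-root interior vertex of
indegree one) has outdegree at least 2, and every hybrid vertex (a vertex of
indegree at least 2) has outdegree at least 1. -/
def IsPhyloNet (N : Net) (X : Finset ℕ) : Prop :=
  (∀ a ∈ N.arcs, a.1 ∈ N.verts ∧ a.2 ∈ N.verts) ∧
  (∀ v : ℕ, ¬ Relation.TransGen N.ArcRel v v) ∧
  N.root ∈ N.verts ∧ N.indeg N.root = 0 ∧
  (∀ v ∈ N.verts, N.indeg v = 0 → v = N.root) ∧
  X ⊆ N.verts ∧ (∀ v ∈ N.verts, (N.IsLeaf v ↔ v ∈ X)) ∧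
  (∀ v ∈ N.verts, v ≠ N.root → N.outdeg v ≠ 0 → N.indeg v = 1 → 2 ≤ N.outdeg v) ∧
  (∀ v ∈ N.verts, 2 ≤ N.indeg v → 1 ≤ N.outdeg v)

/-- Adjacency in the (simple) underlying undirected graph of `N`. -/
def Adj (N : Net) (u v : ℕ) : Prop := (u, v) ∈ N.arcs ∨ (v, u) ∈ N.arcs

/-- `C` is (the vertex set of) a cycle in the underlying graph of `N`:
a set of `n ≥ 3` vertices that can be ordered cyclically so that consecutive
vertices are adjacent. -/
def IsCycle (N : Net) (C : Finset ℕ) : Prop :=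
  ∃ n : ℕ, ∃ hn : 3 ≤ n, ∃ f : Fin n → ℕ,
    Function.Injective f ∧ Finset.image f Finset.univ = C ∧
    ∀ i : Fin n, N.Adj (f i) (f ⟨(i.val + 1) % n, Nat.mod_lt _ (by omega)⟩)

/-- `N` is 1-nested: every pair of distinct cycles of the underlying graph
meets in at most one vertex. -/
def OneNested (N : Net) : Prop :=
  ∀ C₁ C₂ : Finset ℕ, N.IsCycle C₁ → N.IsCycle C₂ → C₁ ≠ C₂ → (C₁ ∩ C₂).card ≤ 1

/-- `p` is a (nonempty) directed path in `N`, recorded as its list of vertices. -/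
def IsPath (N : Net) (p : List ℕ) : Prop :=
  p ≠ [] ∧ List.Chain' N.ArcRel p ∧ ∀ u ∈ p, u ∈ N.verts

/-- `p` is a directed path in `N` from `u` to `v`. -/
def IsPathFromTo (N : Net) (u v : ℕ) (p : List ℕ) : Prop :=
  N.IsPath p ∧ p.head? = some u ∧ p.getLast? = some v

/-- `v` lies on every directed path in `N` from the root to every element of `Y`. -/
def OnAllRootPaths (N : Net) (Y : Finset ℕ) (v : ℕ) : Prop :=
  ∀ y ∈ Y, ∀ p : List ℕ, N.IsPathFromTo N.root y p → v ∈ p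

/-- `v = v(Y)`: the last vertex (w.r.t. the order induced by the arcs) not in `Y`
lying on every directed path from the root to every element of `Y`. -/
def IsLCA (N : Net) (Y : Finset ℕ) (v : ℕ) : Prop :=
  v ∈ N.verts ∧ v ∉ Y ∧ N.OnAllRootPaths Y v ∧
  ∀ w ∈ N.verts, w ∉ Y → N.OnAllRootPaths Y w → N.Reach w v

/-- `v = v*_N`: there exist distinct leaves `x, y ∈ X` with `v = v({x,y})`, and for every
pair of distinct leaves `u, w ∈ X`, either `v({u,w}) = v` or `v({u,w})` is
reachable from `v`. -/
def IsVStar (N : Net) (X : Finset ℕ) (v : ℕ) : Prop :=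
  (∃ x ∈ X, ∃ y ∈ X, x ≠ y ∧ N.IsLCA {x, y} v) ∧
  ∀ u ∈ X, ∀ w ∈ X, u ≠ w →
    ∀ t : ℕ, N.IsLCA {u, w} t → t = v ∨ N.Reach v t

/-- `N` is recoverable: the root equals `v*_N`. -/
def Recoverable (N : Net) (X : Finset ℕ) : Prop := N.IsVStar X N.root

/-- Connectivity (in the underlying graph) within the vertex set `S`. -/
def ConnOn (N : Net) (S : Finset ℕ) (a b : ℕ) : Prop :=
  Relation.ReflTransGen (fun u w => u ∈ S ∧ w ∈ S ∧ N.Adj u w) a b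

/-- `v` is a cut vertex of `N`: deleting `v` disconnects the underlying graph. -/
def IsCutVertex (N : Net) (v : ℕ) : Prop :=
  v ∈ N.verts ∧ ∃ a ∈ N.verts.erase v, ∃ b ∈ N.verts.erase v,
    ¬ N.ConnOn (N.verts.erase v) a b

/-- `v` is a separating vertex of `N` (w.r.t. leaf set `X`): a cut vertex such that
some connected component of `N` minus `v` contains no leaf. -/
def IsSepVertex (N : Net) (X : Finset ℕ) (v : ℕ) : Prop :=
  N.IsCutVertex v ∧ ∃ a ∈ N.verts.erase v,
    ∀ b ∈ N.verts.erase v, N.ConnOn (N.verts.erase v) a b → b ∉ X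

open scoped Classical in
/-- The subnetwork of `N` which is the union of all directed paths from `v`
to elements of `Y`, rooted at `v`. -/
def restrictTo (N : Net) (v : ℕ) (Y : Finset ℕ) : Net :=
  { verts := N.verts.filter fun w => N.Reach v w ∧ ∃ y ∈ Y, N.Reach w y
    arcs := N.arcs.filter fun a => N.Reach v a.1 ∧ ∃ y ∈ Y, N.Reach a.2 y
    root := v }

/-- One suppression step: suppress a vertex `w` of indegree 1 and outdegree 1
(its unique in-arc `(u,w)` and out-arc `(w,x)` are replaced by the arc `(u,x)`;
since arc sets are plain finite sets, any multiple arc arising this way is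
automatically merged). -/
def SuppStep (N M : Net) : Prop :=
  ∃ u w x : ℕ, (u, w) ∈ N.arcs ∧ (w, x) ∈ N.arcs ∧
    N.indeg w = 1 ∧ N.outdeg w = 1 ∧
    M.verts = N.verts.erase w ∧
    M.arcs = insert (u, x) ((N.arcs.erase (u, w)).erase (w, x)) ∧
    M.root = N.root

/-- `M` is the result of repeatedly suppressing indegree-1-outdegree-1 vertices
of `N` (merging multiple arcs) until none are left. -/
def Suppresses (N M : Net) : Prop :=
  Relation.ReflTransGen SuppStep N M ∧
  ∀ w ∈ M.verts, ¬ (M.indeg w = 1 ∧ M.outdeg w = 1)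

/-- Isomorphism of networks restricting to the identity on `X`. -/
def IsIsoOn (N M : Net) (X : Finset ℕ) : Prop :=
  ∃ f : ℕ → ℕ, Set.BijOn f ↑N.verts ↑M.verts ∧
    (∀ u ∈ N.verts, ∀ w ∈ N.verts, ((u, w) ∈ N.arcs ↔ (f u, f w) ∈ M.arcs)) ∧
    f N.root = M.root ∧ ∀ x ∈ X, f x = x

/-- `T` is (a copy, up to isomorphism fixing the leaves, of) the trinet `N_Y`
displayed by `N` on `Y`: take the union of all directed paths from `v(Y)` to the
elements of `Y` and repeatedly suppress indegree-1-outdegree-1 vertices and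
multiple arcs until a trinet on `Y` is obtained. -/
def Displays (N : Net) (Y : Finset ℕ) (T : Net) : Prop :=
  ∃ v : ℕ, N.IsLCA Y v ∧ ∃ T₀ : Net, Suppresses (N.restrictTo v Y) T₀ ∧ T₀.IsIsoOn T Y

/-- The arcs of `N` having both endpoints in `C`. -/
def arcsIn (N : Net) (C : Finset ℕ) : Finset (ℕ × ℕ) :=
  N.arcs.filter fun a => a.1 ∈ C ∧ a.2 ∈ C

/-- `Z(C)`: the vertices of `C` that are tails of two distinct arcs of `N` having
both endpoints in `C`. -/
def ZSet (N : Net) (C : Finset ℕ) : Finset ℕ :=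
  C.filter fun v => ∃ a ∈ N.arcsIn C, ∃ b ∈ N.arcsIn C, a ≠ b ∧ a.1 = v ∧ b.1 = v

/-- `h = h_C`: a vertex of `C` having two of its incoming arcs among the arcs of `N`
with both endpoints in `C`. -/
def IsHybridOfCycle (N : Net) (C : Finset ℕ) (h : ℕ) : Prop :=
  h ∈ C ∧ ∃ a ∈ N.arcsIn C, ∃ b ∈ N.arcsIn C, a ≠ b ∧ a.2 = h ∧ b.2 = h

/-- A tree vertex: an interior vertex of indegree 1 (interior: outdegree nonzero;
indegree 1 excludes the root). -/
def IsTreeVert (N : Net) (v : ℕ) : Prop := N.indeg v = 1 ∧ 1 ≤ N.outdeg v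

/-- `w = w(l)`: the vertex distinct from `l` lying on every directed path from the
root to `l` which is a hybrid vertex and from which there is a unique directed path
to `l` all of whose interior vertices are tree vertices. -/
def IsWVert (N : Net) (l w : ℕ) : Prop :=
  w ∈ N.verts ∧ w ≠ l ∧ (∀ p : List ℕ, N.IsPathFromTo N.root l p → w ∈ p) ∧
  2 ≤ N.indeg w ∧
  ∃! p : List ℕ, N.IsPathFromTo w l p ∧ ∀ u ∈ p, u ≠ w → u ≠ l → N.IsTreeVert u

/-- The underlying graph of `N` is a tree (connected and without cycles);
together with `IsPhyloNet` this says that `N` is a rooted phylogenetic tree. -/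
def IsTreeNet (N : Net) : Prop :=
  (∀ a ∈ N.verts, ∀ b ∈ N.verts, N.ConnOn N.verts a b) ∧
  ∀ C : Finset ℕ, ¬ N.IsCycle C

/-- `v = v_S` witnesses that `S` is a cherry of `N` on `X`: there is an arc from `v`
to every element of `S` and no arc from `v` to any element of `X - S`. -/
def IsCherryVert (N : Net) (X S : Finset ℕ) (v : ℕ) : Prop :=
  v ∈ N.verts ∧ (∀ x ∈ S, (v, x) ∈ N.arcs) ∧ ∀ x ∈ X, x ∉ S → (v, x) ∉ N.arcs

/-- `S` is a cherry of `N` on `X`. -/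
def IsCherry (N : Net) (X S : Finset ℕ) : Prop :=
  2 ≤ S.card ∧ S ⊆ X ∧ ∃ v : ℕ, N.IsCherryVert X S v

/-- `S` is an isolated cherry of `N` on `X`. -/
def IsIsolatedCherry (N : Net) (X S : Finset ℕ) : Prop :=
  2 ≤ S.card ∧ S ⊆ X ∧
  ∃ v : ℕ, N.IsCherryVert X S v ∧ N.outdeg v = S.card ∧ N.indeg v = 1

/-- `(A : B : z)` is a cactus of `N` on `X` with split vertex `vH`, end vertex `h`,
and cycle interior vertices `P` (carrying the pendant leaves `A` in order) and `Q`
(carrying the pendant leaves `B` in order). -/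
def IsCactusData (N : Net) (X : Finset ℕ) (A B : List ℕ) (z vH h : ℕ)
    (P Q : List ℕ) : Prop :=
  A ≠ [] ∧ (A ++ B ++ [z]).Nodup ∧ (∀ x ∈ A ++ B ++ [z], x ∈ X) ∧
  P.length = A.length ∧ Q.length = B.length ∧
  List.Chain' N.ArcRel (vH :: (P ++ [h])) ∧
  List.Chain' N.ArcRel (vH :: (Q ++ [h])) ∧
  (vH :: h :: (P ++ Q)).Nodup ∧
  (∀ u ∈ vH :: h :: (P ++ Q), u ∈ N.verts) ∧
  N.outdeg h = 1 ∧ (h, z) ∈ N.arcs ∧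
  (∀ pr ∈ P.zip A, (pr.1, pr.2) ∈ N.arcs) ∧
  (∀ pr ∈ Q.zip B, (pr.1, pr.2) ∈ N.arcs) ∧
  (∀ u ∈ P ++ Q, N.indeg u = 1 ∧ N.outdeg u = 2)

/-- `(A : B : z)` is a cactus of `N` on `X` with split vertex `vH` and end vertex `h`. -/
def IsCactus (N : Net) (X : Finset ℕ) (A B : List ℕ) (z vH h : ℕ) : Prop :=
  ∃ P Q : List ℕ, N.IsCactusData X A B z vH h P Q

/-- The support of a cactus `(A : B : z)`. -/
def cactusSupport (A B : List ℕ) (z : ℕ) : Finset ℕ := (A ++ B ++ [z]).toFinset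

/-- The split vertex condition making a cactus isolated. -/
def IsIsolatedAt (N : Net) (vH : ℕ) : Prop := N.indeg vH = 1 ∧ N.outdeg vH = 2

/-- Renaming: `rn a b` maps `a` to `b` and fixes everything else. -/
def rn (a b u : ℕ) : ℕ := if u = a then b else u

/-- Cherry reduction `C_{z:S}`: remove all leaves in `S` except `z`,
together with their incident arcs. -/
def cherryRed (N : Net) (S : Finset ℕ) (z : ℕ) : Net :=
  { verts := N.verts \ S.erase z
    arcs := N.arcs.filter fun a => a.1 ∉ S.erase z ∧ a.2 ∉ S.erase z
    root := N.root }

/-- Isolated cherry reduction `C̄_{z:S}` (for the cherry at `vS`): remove all leaves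
in `S` together with their incident arcs and relabel `vS` as the leaf `z`. -/
def isoCherryRed (N : Net) (S : Finset ℕ) (z vS : ℕ) : Net :=
  { verts := (N.verts \ S).image (rn vS z)
    arcs := (N.arcs.filter fun a => a.1 ∉ S ∧ a.2 ∉ S).image
      fun a => (rn vS z a.1, rn vS z a.2)
    root := rn vS z N.root }

/-- Cactus reduction `H_{z:S}`: here `D = C_H - {v_H}`; remove the vertices in
`D ∪ (S - {z})` together with all arcs meeting them (this includes the two outgoing
cycle arcs of `v_H`) and add the new arc `(v_H, z)`. -/
def cactusRed (N : Net) (D S : Finset ℕ) (z vH : ℕ) : Net :=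
  { verts := N.verts \ (D ∪ S.erase z)
    arcs := insert (vH, z)
      (N.arcs.filter fun a => a.1 ∉ D ∪ S.erase z ∧ a.2 ∉ D ∪ S.erase z)
    root := N.root }

/-- Isolated cactus reduction `H̄_{z:S}`: here `D = C_H - {v_H}`; remove the vertices
in `D ∪ (S - {z})` together with all arcs meeting them (this includes the two outgoing
arcs of `v_H`) and replace `v_H` by `z`. -/
def isoCactusRed (N : Net) (D S : Finset ℕ) (z vH : ℕ) : Net :=
  { verts := (N.verts \ (D ∪ S.erase z)).image (rn vH z)
    arcs := (N.arcs.filter fun a => a.1 ∉ D ∪ S.erase z ∧ a.2 ∉ D ∪ S.erase z).image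
      fun a => (rn vH z a.1, rn vH z a.2)
    root := rn vH z N.root }

/-- The four kinds of reductions. -/
inductive RedKind : Type
  | cherry | isoCherry | cactus | isoCactus

/-- `M` is the result of applying the reduction `R_{z:S}` of kind `k` to `N`
(in particular the corresponding cherry/cactus structure is present in `N`). -/
def IsReductionOf (k : RedKind) (N : Net) (X S : Finset ℕ) (z : ℕ) (M : Net) : Prop :=
  match k with
  | .cherry => z ∈ S ∧ N.IsCherry X S ∧ ¬ N.IsIsolatedCherry X S ∧ M = N.cherryRed S z
  | .isoCherry => z ∈ S ∧ 2 ≤ S.card ∧ S ⊆ X ∧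
      ∃ vS : ℕ, N.IsCherryVert X S vS ∧ N.outdeg vS = S.card ∧ N.indeg vS = 1 ∧
        M = N.isoCherryRed S z vS
  | .cactus => ∃ A B : List ℕ, ∃ vH h : ℕ, ∃ P Q : List ℕ,
      N.IsCactusData X A B z vH h P Q ∧ S = cactusSupport A B z ∧
      ¬ N.IsIsolatedAt vH ∧ M = N.cactusRed (insert h (P ++ Q).toFinset) S z vH
  | .isoCactus => ∃ A B : List ℕ, ∃ vH h : ℕ, ∃ P Q : List ℕ,
      N.IsCactusData X A B z vH h P Q ∧ S = cactusSupport A B z ∧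
      N.IsIsolatedAt vH ∧ M = N.isoCactusRed (insert h (P ++ Q).toFinset) S z vH

/-- Cherry expansion `C⁻¹_{z:S}`: replace the leaf `z` by a new vertex `v` and add
new arcs `(v, s)` for all `s ∈ S` (recall `z ∈ S`). -/
def cherryExp (N : Net) (S : Finset ℕ) (z v : ℕ) : Net :=
  { verts := N.verts.image (rn z v) ∪ S
    arcs := (N.arcs.image fun a => (rn z v a.1, rn z v a.2)) ∪ S.image fun s => (v, s)
    root := rn z v N.root }

end Net

namespace Net

theorem net_ext {N M : Net} (h1 : N.verts = M.verts) (h2 : N.arcs = M.arcs)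
    (h3 : N.root = M.root) : N = M := by
  cases N; cases M; simp_all

theorem indeg_pos_of_mem {N : Net} {a b : ℕ} (h : (a, b) ∈ N.arcs) : 0 < N.indeg b :=
  Finset.card_pos.2 ⟨(a, b), Finset.mem_filter.2 ⟨h, rfl⟩⟩

theorem outdeg_pos_of_mem {N : Net} {a b : ℕ} (h : (a, b) ∈ N.arcs) : 0 < N.outdeg a :=
  Finset.card_pos.2 ⟨(a, b), Finset.mem_filter.2 ⟨h, rfl⟩⟩

theorem exists_in_arc {N : Net} {b : ℕ} (h : 0 < N.indeg b) : ∃ a, (a, b) ∈ N.arcs := by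
  obtain ⟨p, hp⟩ := Finset.card_pos.1 h
  rw [Finset.mem_filter] at hp
  exact ⟨p.1, by rw [show (p.1, b) = p from Prod.ext rfl hp.2.symm]; exact hp.1⟩

theorem exists_out_arc {N : Net} {a : ℕ} (h : 0 < N.outdeg a) : ∃ b, (a, b) ∈ N.arcs := by
  obtain ⟨p, hp⟩ := Finset.card_pos.1 h
  rw [Finset.mem_filter] at hp
  exact ⟨p.2, by rw [show (a, p.2) = p from Prod.ext hp.2.symm rfl]; exact hp.1⟩

theorem indeg_one_unique {N : Net} {b : ℕ} (h : N.indeg b = 1) {a a' : ℕ}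
    (h1 : (a, b) ∈ N.arcs) (h2 : (a', b) ∈ N.arcs) : a = a' := by
  have := Finset.card_le_one.1 (le_of_eq h) (a, b)
    (Finset.mem_filter.2 ⟨h1, rfl⟩) (a', b) (Finset.mem_filter.2 ⟨h2, rfl⟩)
  exact (Prod.ext_iff.1 this).1

theorem outdeg_one_unique {N : Net} {a : ℕ} (h : N.outdeg a = 1) {b b' : ℕ}
    (h1 : (a, b) ∈ N.arcs) (h2 : (a, b') ∈ N.arcs) : b = b' := by
  have := Finset.card_le_one.1 (le_of_eq h) (a, b)
    (Finset.mem_filter.2 ⟨h1, rfl⟩) (a, b') (Finset.mem_filter.2 ⟨h2, rfl⟩)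
  exact (Prod.ext_iff.1 this).2

theorem eq_of_outdeg_zero_reach {N : Net} {a b : ℕ} (h : N.outdeg a = 0)
    (hr : N.Reach a b) : a = b := by
  rcases (Relation.reflTransGen_iff_eq_or_transGen.1 hr) with h' | h'
  · exact h'.symm
  · obtain ⟨c, hc, -⟩ := Relation.TransGen.head'_iff.1 h'
    exact absurd (outdeg_pos_of_mem hc) (by omega)

theorem reach_of_mem_chain' {N : Net} : ∀ {p : List ℕ} {v b : ℕ},
    List.Chain' N.ArcRel p → v ∈ p → p.getLast? = some b → N.Reach v b := by
  intro p
  induction p with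
  | nil => intro v b _ hv _; simp at hv
  | cons a rest ih =>
    intro v b hch hv hl
    cases rest with
    | nil =>
      simp at hv hl
      subst hv; subst hl; exact Relation.ReflTransGen.refl
    | cons c t =>
      rw [List.getLast?_cons_cons] at hl
      rcases List.mem_cons.1 hv with rfl | hv'
      · exact Relation.ReflTransGen.head (List.isChain_cons_cons.1 hch).1
          (ih (List.isChain_cons_cons.1 hch).2 (List.mem_cons_self) hl)
      · exact ih (List.isChain_cons_cons.1 hch).2 hv' hl

theorem mem_chain'_last_or_succ {r : ℕ → ℕ → Prop} : ∀ {p : List ℕ} {v b : ℕ},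
    List.Chain' r p → v ∈ p → p.getLast? = some b → v = b ∨ ∃ w ∈ p, r v w := by
  intro p
  induction p with
  | nil => intro v b _ hv _; simp at hv
  | cons a rest ih =>
    intro v b hch hv hl
    cases rest with
    | nil =>
      simp at hv hl; left; omega
    | cons c t =>
      rw [List.getLast?_cons_cons] at hl
      rcases List.mem_cons.1 hv with rfl | hv'
      · exact Or.inr ⟨c, List.mem_cons.2 (Or.inr (List.mem_cons_self)),
          (List.isChain_cons_cons.1 hch).1⟩
      · rcases ih (List.isChain_cons_cons.1 hch).2 hv' hl with h' | ⟨w, hw, hrw⟩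
        · exact Or.inl h'
        · exact Or.inr ⟨w, List.mem_cons.2 (Or.inr hw), hrw⟩

theorem reach_iff_path {N : Net}
    (hInv : ∀ a ∈ N.arcs, a.1 ∈ N.verts ∧ a.2 ∈ N.verts) {a b : ℕ} (ha : a ∈ N.verts) :
    N.Reach a b ↔ ∃ p, N.IsPathFromTo a b p := by
  constructor
  · intro hr
    have H : ∀ x, N.Reach x b → x ∈ N.verts → ∃ p, N.IsPathFromTo x b p := by
      intro x hx
      induction hx using Relation.ReflTransGen.head_induction_on with
      | refl =>
        intro hb
        exact ⟨[b], ⟨by simp, List.isChain_singleton _, by simpa using hb⟩, by simp, by simp⟩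
      | head hac hcb ih =>
        rename_i x c
        intro hx
        obtain ⟨p, ⟨hne, hch, hmem⟩, hh, hl⟩ := ih (hInv _ hac).2
        refine ⟨x :: p, ⟨by simp, ?_, ?_⟩, by simp, ?_⟩
        · refine List.isChain_cons.2 ⟨fun y hy => ?_, hch⟩
          rw [hh] at hy
          cases hy
          exact hac
        · intro u hu
          rcases List.mem_cons.1 hu with rfl | hu'
          · exact hx
          · exact hmem u hu'
        · cases p with
          | nil => simp at hne
          | cons c' t => rw [List.getLast?_cons_cons]; exact hl
    exact H a hr ha
  · rintro ⟨p, ⟨hne, hch, -⟩, hh, hl⟩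
    clear hInv ha
    induction p generalizing a with
    | nil => simp at hne
    | cons x rest ih =>
      simp at hh; subst hh
      cases rest with
      | nil => simp at hl; subst hl; exact Relation.ReflTransGen.refl
      | cons c t =>
        rw [List.getLast?_cons_cons] at hl
        exact Relation.ReflTransGen.head (List.isChain_cons_cons.1 hch).1
          (ih (by simp) (List.isChain_cons_cons.1 hch).2 rfl hl)

end Net

namespace Net

theorem chain'_imp_mem {r r' : ℕ → ℕ → Prop} : ∀ {p : List ℕ}, List.Chain' r p →
    (∀ a ∈ p, ∀ b ∈ p, r a b → r' a b) → List.Chain' r' p := by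
  intro p
  induction p with
  | nil => intro _ _; exact List.isChain_nil
  | cons a rest ih =>
    intro hch himp
    cases rest with
    | nil => exact List.isChain_singleton _
    | cons c t =>
      refine List.isChain_cons_cons.2 ⟨himp a (by simp) c (by simp) (List.isChain_cons_cons.1 hch).1, ?_⟩
      exact ih (List.isChain_cons_cons.1 hch).2 (fun x hx y hy => himp x (by simp [hx]) y (by simp [hy]))

theorem reach_root {N : Net}
    (hInv : ∀ a ∈ N.arcs, a.1 ∈ N.verts ∧ a.2 ∈ N.verts)
    (hacyc : ∀ v, ¬ Relation.TransGen N.ArcRel v v)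
    (hroot : ∀ v ∈ N.verts, N.indeg v = 0 → v = N.root) :
    ∀ v ∈ N.verts, N.Reach N.root v := by
  classical
  have key : ∀ n v, v ∈ N.verts → (N.verts.filter (fun w => N.Reach w v)).card ≤ n →
      N.Reach N.root v := by
    intro n
    induction n with
    | zero =>
      intro v hv hc
      have hmem : v ∈ N.verts.filter (fun w => N.Reach w v) :=
        Finset.mem_filter.2 ⟨hv, Relation.ReflTransGen.refl⟩
      rw [Finset.card_eq_zero.1 (Nat.le_zero.1 hc)] at hmem
      simp at hmem
    | succ n ih =>
      intro v hv hc
      by_cases hvr : v = N.root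
      · subst hvr; exact Relation.ReflTransGen.refl
      · have hind : N.indeg v ≠ 0 := fun h => hvr (hroot v hv h)
        obtain ⟨u, hu⟩ := exists_in_arc (Nat.pos_of_ne_zero hind)
        have huv : u ∈ N.verts := (hInv _ hu).1
        have hsub : N.verts.filter (fun w => N.Reach w u) ⊆
            (N.verts.filter (fun w => N.Reach w v)).erase v := by
          intro w hw
          rw [Finset.mem_filter] at hw
          refine Finset.mem_erase.2 ⟨?_, Finset.mem_filter.2
            ⟨hw.1, Relation.ReflTransGen.tail hw.2 hu⟩⟩
          rintro rfl
          exact hacyc _ (Relation.TransGen.tail' hw.2 hu)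
        have hv1 : v ∈ N.verts.filter (fun w => N.Reach w v) :=
          Finset.mem_filter.2 ⟨hv, Relation.ReflTransGen.refl⟩
        have hle := Finset.card_le_card hsub
        rw [Finset.card_erase_of_mem hv1] at hle
        exact Relation.ReflTransGen.tail (ih u huv (by omega)) hu
  exact fun v hv => key _ v hv le_rfl

theorem path_snoc {N : Net} {q : List ℕ} {a t zv : ℕ} (hq : N.IsPathFromTo a t q)
    (harc : (t, zv) ∈ N.arcs) (hzv : zv ∈ N.verts) :
    N.IsPathFromTo a zv (q ++ [zv]) := by
  obtain ⟨⟨hne, hch, hmem⟩, hh, hl⟩ := hq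
  refine ⟨⟨by simp, ?_, ?_⟩, ?_, by simp⟩
  · refine List.isChain_append.2 ⟨hch, by simp, ?_⟩
    intro x hx y hy
    rw [hl] at hx
    simp at hx hy
    subst hx; subst hy; exact harc
  · intro u hu
    rcases List.mem_append.1 hu with h | h
    · exact hmem u h
    · simp at h; subst h; exact hzv
  · cases q with
    | nil => simp at hne
    | cons a' t' => simpa using hh

theorem path_unsnoc {N : Net} {p : List ℕ} {a zv : ℕ} (hp : N.IsPathFromTo a zv p)
    (hne2 : a ≠ zv) :
    ∃ q t, p = q ++ [zv] ∧ N.IsPathFromTo a t q ∧ (t, zv) ∈ N.arcs := by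
  obtain ⟨⟨hne, hch, hmem⟩, hh, hl⟩ := hp
  have hplz : p.getLast hne = zv := by
    rw [List.getLast?_eq_getLast hne] at hl; exact Option.some_injective _ hl
  obtain ⟨q, hdec⟩ : ∃ q, q ++ [zv] = p :=
    ⟨p.dropLast, by rw [← hplz]; exact List.dropLast_append_getLast hne⟩
  have hqne : q ≠ [] := by
    intro h
    rw [h] at hdec
    rw [← hdec] at hh
    simp at hh
    exact hne2 hh.symm
  have hchq : List.Chain' N.ArcRel q ∧ ∀ x ∈ q.getLast?, ∀ y ∈ ([zv] : List ℕ).head?, N.ArcRel x y := by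
    have := List.isChain_append.1 (hdec ▸ hch)
    exact ⟨this.1, this.2.2⟩
  obtain ⟨t, ht⟩ : ∃ t, q.getLast? = some t := ⟨q.getLast hqne, List.getLast?_eq_getLast hqne⟩
  refine ⟨q, t, hdec.symm, ⟨⟨hqne, hchq.1, ?_⟩, ?_, ht⟩, hchq.2 t (by rw [ht]; rfl) zv rfl⟩
  · intro u hu
    exact hmem u (by rw [← hdec]; exact List.mem_append.2 (Or.inl hu))
  · rw [← hdec] at hh
    cases q with
    | nil => simp at hqne
    | cons a' t' => simp at hh ⊢; exact hh

/-- vertices with outdegree zero occur in a path only as the final vertex. -/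
theorem path_avoid_sink {N : Net} {p : List ℕ} {a y v : ℕ} (hp : N.IsPathFromTo a y p)
    (hv : N.outdeg v = 0) (hvy : v ≠ y) : v ∉ p := by
  intro hmem
  rcases mem_chain'_last_or_succ hp.1.2.1 hmem hp.2.2 with h | ⟨w, _, hw⟩
  · exact hvy h
  · exact absurd (outdeg_pos_of_mem hw) (by omega)

end Net

namespace Net

/-- Invariant preserved by suppression: arcs live on vertices, and acyclicity. -/
def Inv (N : Net) : Prop :=
  (∀ a ∈ N.arcs, a.1 ∈ N.verts ∧ a.2 ∈ N.verts) ∧ ∀ v, ¬ Relation.TransGen N.ArcRel v v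

/-- The data of a single suppression step. -/
def StepAt (N : Net) (u w x : ℕ) : Prop :=
  (u, w) ∈ N.arcs ∧ (w, x) ∈ N.arcs ∧ N.indeg w = 1 ∧ N.outdeg w = 1

/-- The result of a single suppression step. -/
def result (N : Net) (u w x : ℕ) : Net :=
  { verts := N.verts.erase w
    arcs := insert (u, x) ((N.arcs.erase (u, w)).erase (w, x))
    root := N.root }

theorem stepAt_suppStep {N : Net} {u w x : ℕ} (h : StepAt N u w x) :
    SuppStep N (result N u w x) :=
  ⟨u, w, x, h.1, h.2.1, h.2.2.1, h.2.2.2, rfl, rfl, rfl⟩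

theorem suppStep_iff {N M : Net} :
    SuppStep N M ↔ ∃ u w x, StepAt N u w x ∧ M = result N u w x := by
  constructor
  · rintro ⟨u, w, x, h1, h2, h3, h4, hv, ha, hr⟩
    exact ⟨u, w, x, ⟨h1, h2, h3, h4⟩, net_ext hv ha hr⟩
  · rintro ⟨u, w, x, h, rfl⟩
    exact stepAt_suppStep h

theorem stepAt_ne {N : Net} (hI : Inv N) {u w x : ℕ} (h : StepAt N u w x) :
    u ≠ w ∧ x ≠ w ∧ u ≠ x := by
  refine ⟨?_, ?_, ?_⟩
  · rintro rfl; exact hI.2 u (Relation.TransGen.single h.1)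
  · rintro rfl; exact hI.2 x (Relation.TransGen.single h.2.1)
  · rintro rfl; exact hI.2 u (Relation.TransGen.head h.1 (Relation.TransGen.single h.2.1))

theorem mem_result_arcs {N : Net} {u w x : ℕ} {a : ℕ × ℕ} :
    a ∈ (result N u w x).arcs ↔ a = (u, x) ∨ (a ≠ (u, w) ∧ a ≠ (w, x) ∧ a ∈ N.arcs) := by
  simp only [result, Finset.mem_insert, Finset.mem_erase]
  tauto

theorem result_arcRel_transGen {N : Net} {u w x : ℕ} (h : StepAt N u w x) {a b : ℕ}
    (hab : (result N u w x).ArcRel a b) : Relation.TransGen N.ArcRel a b := by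
  rcases mem_result_arcs.1 hab with h' | h'
  · rw [Prod.ext_iff] at h'
    obtain ⟨rfl, rfl⟩ := h'
    exact Relation.TransGen.head h.1 (Relation.TransGen.single h.2.1)
  · exact Relation.TransGen.single h'.2.2

theorem suppstep_inv {N M : Net} (hI : Inv N) (h : SuppStep N M) : Inv M := by
  obtain ⟨u, w, x, hs, rfl⟩ := suppStep_iff.1 h
  obtain ⟨huw, hxw, hux⟩ := stepAt_ne hI hs
  constructor
  · rintro ⟨a1, a2⟩ ha
    rcases mem_result_arcs.1 ha with h' | h'
    · rw [Prod.ext_iff] at h'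
      obtain ⟨h1, h2⟩ := h'
      simp only at h1 h2
      subst h1; subst h2
      exact ⟨Finset.mem_erase.2 ⟨huw, (hI.1 _ hs.1).1⟩,
             Finset.mem_erase.2 ⟨hxw, (hI.1 _ hs.2.1).2⟩⟩
    · obtain ⟨hne1, hne2, hA⟩ := h'
      have h1w : a1 ≠ w := by
        rintro rfl
        exact hne2 (by rw [outdeg_one_unique hs.2.2.2 hA hs.2.1])
      have h2w : a2 ≠ w := by
        rintro rfl
        exact hne1 (by rw [indeg_one_unique hs.2.2.1 hA hs.1])
      exact ⟨Finset.mem_erase.2 ⟨h1w, (hI.1 _ hA).1⟩,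
             Finset.mem_erase.2 ⟨h2w, (hI.1 _ hA).2⟩⟩
  · intro v hv
    have h2 := Relation.TransGen.mono (fun a b hab => result_arcRel_transGen hs hab) _ _ hv
    rw [Relation.transGen_idem] at h2
    exact hI.2 v h2

theorem suppstep_card {N M : Net} (hI : Inv N) (h : SuppStep N M) :
    M.verts.card < N.verts.card := by
  obtain ⟨u, w, x, hs, rfl⟩ := suppStep_iff.1 h
  have hw : w ∈ N.verts := (hI.1 _ hs.1).2
  exact Finset.card_erase_lt_of_mem hw

theorem suppstep_det {N : Net} {u1 w x1 u2 x2 : ℕ}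
    (h1 : StepAt N u1 w x1) (h2 : StepAt N u2 w x2) :
    result N u1 w x1 = result N u2 w x2 := by
  have hu : u1 = u2 := indeg_one_unique h1.2.2.1 h1.1 h2.1
  have hx : x1 = x2 := outdeg_one_unique h1.2.2.2 h1.2.1 h2.2.1
  rw [hu, hx]

theorem erase3_comm {α : Type*} [DecidableEq α] (s : Finset α) (a b c : α) :
    ((s.erase a).erase b).erase c = ((s.erase c).erase a).erase b := by
  ext x; simp only [Finset.mem_erase]; tauto

theorem erase4_comm {α : Type*} [DecidableEq α] (s : Finset α) (a b c d : α) :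
    (((s.erase a).erase b).erase c).erase d = (((s.erase c).erase d).erase a).erase b := by
  ext x; simp only [Finset.mem_erase]; tauto

/-- Diamond, chain case: `u1 → w1 → w2 → x2`. -/
theorem diamond_chain {N : Net} (hI : Inv N) {u1 w1 w2 x2 : ℕ}
    (h1 : StepAt N u1 w1 w2) (h2 : StepAt N w1 w2 x2) :
    ∃ Z, SuppStep (result N u1 w1 w2) Z ∧ SuppStep (result N w1 w2 x2) Z := by
  obtain ⟨hu1w1, hw2w1, hu1w2⟩ := stepAt_ne hI h1
  obtain ⟨hw1w2, hx2w2, hw1x2⟩ := stepAt_ne hI h2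
  have hu1x2 : u1 ≠ x2 := by
    rintro rfl
    exact hI.2 u1 (Relation.TransGen.head h1.1 (Relation.TransGen.head h1.2.1
      (Relation.TransGen.single h2.2.1)))
  have hx2w1 : x2 ≠ w1 := fun h => hw1x2 h.symm
  have hnm1 : (u1, w2) ∉ N.arcs := by
    intro hmem
    exact hu1w1 (indeg_one_unique h2.2.2.1 hmem h2.1)
  have hnm2 : (w1, x2) ∉ N.arcs := by
    intro hmem
    exact hx2w2 (outdeg_one_unique h1.2.2.2 hmem h1.2.1)
  set R1 := result N u1 w1 w2 with hR1
  set R2 := result N w1 w2 x2 with hR2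
  have m1 : ∀ a : ℕ × ℕ, a ∈ R1.arcs ↔
      a = (u1, w2) ∨ (a ≠ (u1, w1) ∧ a ≠ (w1, w2) ∧ a ∈ N.arcs) := fun a => mem_result_arcs
  have m2 : ∀ a : ℕ × ℕ, a ∈ R2.arcs ↔
      a = (w1, x2) ∨ (a ≠ (w1, w2) ∧ a ≠ (w2, x2) ∧ a ∈ N.arcs) := fun a => mem_result_arcs
  have s1 : StepAt R1 u1 w2 x2 := by
    refine ⟨(m1 _).2 (Or.inl rfl), ?_, ?_, ?_⟩
    · refine (m1 _).2 (Or.inr ⟨?_, ?_, h2.2.1⟩)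
      · rw [Ne, Prod.mk.injEq]; rintro ⟨-, h⟩; exact hx2w1 h
      · rw [Ne, Prod.mk.injEq]; rintro ⟨h, -⟩; exact hw1w2 h.symm
    · have hf : R1.arcs.filter (fun a => a.2 = w2) = {(u1, w2)} := by
        ext ⟨a1, a2⟩
        simp only [Finset.mem_filter, Finset.mem_singleton, Prod.mk.injEq]
        constructor
        · rintro ⟨hmem, heq⟩
          rw [heq] at hmem
          rcases (m1 _).1 hmem with h | ⟨hn1, hn2, hA⟩
          · rw [Prod.mk.injEq] at h; exact ⟨h.1, heq⟩
          · exact absurd (by rw [indeg_one_unique h2.2.2.1 hA h2.1] :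
              (a1, w2) = (w1, w2)) hn2
        · rintro ⟨ha, hb⟩
          rw [ha, hb]
          exact ⟨(m1 _).2 (Or.inl rfl), rfl⟩
      unfold indeg
      rw [hf, Finset.card_singleton]
    · have hf : R1.arcs.filter (fun a => a.1 = w2) = {(w2, x2)} := by
        ext ⟨a1, a2⟩
        simp only [Finset.mem_filter, Finset.mem_singleton, Prod.mk.injEq]
        constructor
        · rintro ⟨hmem, heq⟩
          rw [heq] at hmem
          rcases (m1 _).1 hmem with h | ⟨hn1, hn2, hA⟩
          · rw [Prod.mk.injEq] at h; exact absurd h.1.symm hu1w2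
          · exact ⟨heq, outdeg_one_unique h2.2.2.2 hA h2.2.1⟩
        · rintro ⟨ha, hb⟩
          rw [ha, hb]
          refine ⟨(m1 _).2 (Or.inr ⟨?_, ?_, h2.2.1⟩), rfl⟩
          · rw [Ne, Prod.mk.injEq]; rintro ⟨-, h⟩; exact hx2w1 h
          · rw [Ne, Prod.mk.injEq]; rintro ⟨h, -⟩; exact hw1w2 h.symm
      unfold outdeg
      rw [hf, Finset.card_singleton]
  have s2 : StepAt R2 u1 w1 x2 := by
    refine ⟨?_, (m2 _).2 (Or.inl rfl), ?_, ?_⟩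
    · refine (m2 _).2 (Or.inr ⟨?_, ?_, h1.1⟩)
      · rw [Ne, Prod.mk.injEq]; rintro ⟨-, h⟩; exact hw1w2 h
      · rw [Ne, Prod.mk.injEq]; rintro ⟨-, h⟩; exact hx2w1 h.symm
    · have hf : R2.arcs.filter (fun a => a.2 = w1) = {(u1, w1)} := by
        ext ⟨a1, a2⟩
        simp only [Finset.mem_filter, Finset.mem_singleton, Prod.mk.injEq]
        constructor
        · rintro ⟨hmem, heq⟩
          rw [heq] at hmem
          rcases (m2 _).1 hmem with h | ⟨hn1, hn2, hA⟩
          · rw [Prod.mk.injEq] at h; exact absurd h.2.symm hx2w1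
          · exact ⟨indeg_one_unique h1.2.2.1 hA h1.1, heq⟩
        · rintro ⟨ha, hb⟩
          rw [ha, hb]
          refine ⟨(m2 _).2 (Or.inr ⟨?_, ?_, h1.1⟩), rfl⟩
          · rw [Ne, Prod.mk.injEq]; rintro ⟨-, h⟩; exact hw1w2 h
          · rw [Ne, Prod.mk.injEq]; rintro ⟨-, h⟩; exact hx2w1 h.symm
      unfold indeg
      rw [hf, Finset.card_singleton]
    · have hf : R2.arcs.filter (fun a => a.1 = w1) = {(w1, x2)} := by
        ext ⟨a1, a2⟩
        simp only [Finset.mem_filter, Finset.mem_singleton, Prod.mk.injEq]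
        constructor
        · rintro ⟨hmem, heq⟩
          rw [heq] at hmem
          rcases (m2 _).1 hmem with h | ⟨hn1, hn2, hA⟩
          · rw [Prod.mk.injEq] at h; exact ⟨heq, h.2⟩
          · exact absurd (by rw [outdeg_one_unique h1.2.2.2 hA h1.2.1] :
              (w1, a2) = (w1, w2)) hn1
        · rintro ⟨ha, hb⟩
          rw [ha, hb]
          exact ⟨(m2 _).2 (Or.inl rfl), rfl⟩
      unfold outdeg
      rw [hf, Finset.card_singleton]
  refine ⟨result R1 u1 w2 x2, stepAt_suppStep s1, ?_⟩
  have heq : result R2 u1 w1 x2 = result R1 u1 w2 x2 := by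
    refine net_ext ?_ ?_ rfl
    · show (N.verts.erase w2).erase w1 = (N.verts.erase w1).erase w2
      ext y; simp only [Finset.mem_erase]; tauto
    · show insert (u1, x2) ((R2.arcs.erase (u1, w1)).erase (w1, x2)) =
        insert (u1, x2) ((R1.arcs.erase (u1, w2)).erase (w2, x2))
      have e1 : (R1.arcs.erase (u1, w2)).erase (w2, x2) =
          ((N.arcs.erase (u1, w1)).erase (w1, w2)).erase (w2, x2) := by
        have : R1.arcs.erase (u1, w2) = (N.arcs.erase (u1, w1)).erase (w1, w2) := by
          show ((insert (u1, w2) ((N.arcs.erase (u1, w1)).erase (w1, w2))).erase (u1, w2)) = _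
          refine Finset.erase_insert ?_
          simp only [Finset.mem_erase]
          rintro ⟨-, -, h⟩; exact hnm1 h
        rw [this]
      have e2 : (R2.arcs.erase (u1, w1)).erase (w1, x2) =
          ((N.arcs.erase (w1, w2)).erase (w2, x2)).erase (u1, w1) := by
        have e3 : R2.arcs.erase (u1, w1) =
            insert (w1, x2) (((N.arcs.erase (w1, w2)).erase (w2, x2)).erase (u1, w1)) := by
          show ((insert (w1, x2) ((N.arcs.erase (w1, w2)).erase (w2, x2))).erase (u1, w1)) = _
          refine Finset.erase_insert_of_ne ?_
          rw [Ne, Prod.mk.injEq]; rintro ⟨-, h⟩; exact hx2w1 h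
        rw [e3]
        refine Finset.erase_insert ?_
        simp only [Finset.mem_erase]
        rintro ⟨-, -, -, h⟩; exact hnm2 h
      rw [e1, e2]
      congr 1
      ext y; simp only [Finset.mem_erase]; tauto
  rw [← heq]
  exact stepAt_suppStep s2

/-- Diamond, disjoint/general case. -/
theorem diamond {N : Net} (hI : Inv N) {u1 w1 x1 u2 w2 x2 : ℕ}
    (h1 : StepAt N u1 w1 x1) (h2 : StepAt N u2 w2 x2) (hw : w1 ≠ w2) :
    ∃ Z, SuppStep (result N u1 w1 x1) Z ∧ SuppStep (result N u2 w2 x2) Z := by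
  by_cases hc1 : x1 = w2
  · have hu2 : u2 = w1 := indeg_one_unique h2.2.2.1 h2.1 (hc1 ▸ h1.2.1)
    subst hc1; subst hu2
    exact diamond_chain hI h1 h2
  by_cases hc2 : x2 = w1
  · have hu1 : u1 = w2 := indeg_one_unique h1.2.2.1 h1.1 (hc2 ▸ h2.2.1)
    subst hc2; subst hu1
    obtain ⟨Z, hZ1, hZ2⟩ := diamond_chain hI h2 h1
    exact ⟨Z, hZ2, hZ1⟩
  · obtain ⟨hu1w1, hx1w1, hu1x1⟩ := stepAt_ne hI h1
    obtain ⟨hu2w2, hx2w2, hu2x2⟩ := stepAt_ne hI h2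
    have hu1w2 : u1 ≠ w2 := by
      rintro rfl
      exact hc2 (outdeg_one_unique h2.2.2.2 h2.2.1 h1.1)
    have hu2w1 : u2 ≠ w1 := by
      rintro rfl
      exact hc1 (outdeg_one_unique h1.2.2.2 h1.2.1 h2.1)
    set R1 := result N u1 w1 x1 with hR1
    set R2 := result N u2 w2 x2 with hR2
    have m1 : ∀ a : ℕ × ℕ, a ∈ R1.arcs ↔
        a = (u1, x1) ∨ (a ≠ (u1, w1) ∧ a ≠ (w1, x1) ∧ a ∈ N.arcs) := fun a => mem_result_arcs
    have m2 : ∀ a : ℕ × ℕ, a ∈ R2.arcs ↔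
        a = (u2, x2) ∨ (a ≠ (u2, w2) ∧ a ≠ (w2, x2) ∧ a ∈ N.arcs) := fun a => mem_result_arcs
    have s1 : StepAt R1 u2 w2 x2 := by
      refine ⟨?_, ?_, ?_, ?_⟩
      · refine (m1 _).2 (Or.inr ⟨?_, ?_, h2.1⟩)
        · rw [Ne, Prod.mk.injEq]; rintro ⟨-, h⟩; exact hw.symm h
        · rw [Ne, Prod.mk.injEq]; rintro ⟨h, -⟩; exact hu2w1 h
      · refine (m1 _).2 (Or.inr ⟨?_, ?_, h2.2.1⟩)
        · rw [Ne, Prod.mk.injEq]; rintro ⟨-, h⟩; exact hc2 h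
        · rw [Ne, Prod.mk.injEq]; rintro ⟨h, -⟩; exact hw.symm h
      · have hf : R1.arcs.filter (fun a => a.2 = w2) = {(u2, w2)} := by
          ext ⟨a1, a2⟩
          simp only [Finset.mem_filter, Finset.mem_singleton, Prod.mk.injEq]
          constructor
          · rintro ⟨hmem, heq⟩
            rw [heq] at hmem
            rcases (m1 _).1 hmem with h | ⟨hn1, hn2, hA⟩
            · rw [Prod.mk.injEq] at h; exact absurd h.2.symm hc1
            · exact ⟨indeg_one_unique h2.2.2.1 hA h2.1, heq⟩
          · rintro ⟨ha, hb⟩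
            rw [ha, hb]
            refine ⟨(m1 _).2 (Or.inr ⟨?_, ?_, h2.1⟩), rfl⟩
            · rw [Ne, Prod.mk.injEq]; rintro ⟨-, h⟩; exact hw.symm h
            · rw [Ne, Prod.mk.injEq]; rintro ⟨h, -⟩; exact hu2w1 h
        unfold indeg
        rw [hf, Finset.card_singleton]
      · have hf : R1.arcs.filter (fun a => a.1 = w2) = {(w2, x2)} := by
          ext ⟨a1, a2⟩
          simp only [Finset.mem_filter, Finset.mem_singleton, Prod.mk.injEq]
          constructor
          · rintro ⟨hmem, heq⟩
            rw [heq] at hmem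
            rcases (m1 _).1 hmem with h | ⟨hn1, hn2, hA⟩
            · rw [Prod.mk.injEq] at h; exact absurd h.1.symm hu1w2
            · exact ⟨heq, outdeg_one_unique h2.2.2.2 hA h2.2.1⟩
          · rintro ⟨ha, hb⟩
            rw [ha, hb]
            refine ⟨(m1 _).2 (Or.inr ⟨?_, ?_, h2.2.1⟩), rfl⟩
            · rw [Ne, Prod.mk.injEq]; rintro ⟨-, h⟩; exact hc2 h
            · rw [Ne, Prod.mk.injEq]; rintro ⟨h, -⟩; exact hw.symm h
        unfold outdeg
        rw [hf, Finset.card_singleton]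
    have s2 : StepAt R2 u1 w1 x1 := by
      refine ⟨?_, ?_, ?_, ?_⟩
      · refine (m2 _).2 (Or.inr ⟨?_, ?_, h1.1⟩)
        · rw [Ne, Prod.mk.injEq]; rintro ⟨-, h⟩; exact hw h
        · rw [Ne, Prod.mk.injEq]; rintro ⟨h, -⟩; exact hu1w2 h
      · refine (m2 _).2 (Or.inr ⟨?_, ?_, h1.2.1⟩)
        · rw [Ne, Prod.mk.injEq]; rintro ⟨-, h⟩; exact hc1 h
        · rw [Ne, Prod.mk.injEq]; rintro ⟨h, -⟩; exact hw h
      · have hf : R2.arcs.filter (fun a => a.2 = w1) = {(u1, w1)} := by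
          ext ⟨a1, a2⟩
          simp only [Finset.mem_filter, Finset.mem_singleton, Prod.mk.injEq]
          constructor
          · rintro ⟨hmem, heq⟩
            rw [heq] at hmem
            rcases (m2 _).1 hmem with h | ⟨hn1, hn2, hA⟩
            · rw [Prod.mk.injEq] at h; exact absurd h.2.symm hc2
            · exact ⟨indeg_one_unique h1.2.2.1 hA h1.1, heq⟩
          · rintro ⟨ha, hb⟩
            rw [ha, hb]
            refine ⟨(m2 _).2 (Or.inr ⟨?_, ?_, h1.1⟩), rfl⟩
            · rw [Ne, Prod.mk.injEq]; rintro ⟨-, h⟩; exact hw h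
            · rw [Ne, Prod.mk.injEq]; rintro ⟨h, -⟩; exact hu1w2 h
        unfold indeg
        rw [hf, Finset.card_singleton]
      · have hf : R2.arcs.filter (fun a => a.1 = w1) = {(w1, x1)} := by
          ext ⟨a1, a2⟩
          simp only [Finset.mem_filter, Finset.mem_singleton, Prod.mk.injEq]
          constructor
          · rintro ⟨hmem, heq⟩
            rw [heq] at hmem
            rcases (m2 _).1 hmem with h | ⟨hn1, hn2, hA⟩
            · rw [Prod.mk.injEq] at h; exact absurd h.1.symm hu2w1
            · exact ⟨heq, outdeg_one_unique h1.2.2.2 hA h1.2.1⟩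
          · rintro ⟨ha, hb⟩
            rw [ha, hb]
            refine ⟨(m2 _).2 (Or.inr ⟨?_, ?_, h1.2.1⟩), rfl⟩
            · rw [Ne, Prod.mk.injEq]; rintro ⟨-, h⟩; exact hc1 h
            · rw [Ne, Prod.mk.injEq]; rintro ⟨h, -⟩; exact hw h
        unfold outdeg
        rw [hf, Finset.card_singleton]
    refine ⟨result R1 u2 w2 x2, stepAt_suppStep s1, ?_⟩
    have heq : result R2 u1 w1 x1 = result R1 u2 w2 x2 := by
      refine net_ext ?_ ?_ rfl
      · show (N.verts.erase w2).erase w1 = (N.verts.erase w1).erase w2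
        ext y; simp only [Finset.mem_erase]; tauto
      · show insert (u1, x1) ((R2.arcs.erase (u1, w1)).erase (w1, x1)) =
          insert (u2, x2) ((R1.arcs.erase (u2, w2)).erase (w2, x2))
        have e1 : (R1.arcs.erase (u2, w2)).erase (w2, x2) =
            insert (u1, x1) ((((N.arcs.erase (u1, w1)).erase (w1, x1)).erase
              (u2, w2)).erase (w2, x2)) := by
          rw [hR1]
          show ((insert (u1, x1) ((N.arcs.erase (u1, w1)).erase (w1, x1))).erase
            (u2, w2)).erase (w2, x2) = _
          rw [Finset.erase_insert_of_ne (by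
            rw [Ne, Prod.mk.injEq]; rintro ⟨-, h⟩; exact hc1 h),
            Finset.erase_insert_of_ne (by
            rw [Ne, Prod.mk.injEq]; rintro ⟨h, -⟩; exact hu1w2 h)]
        have e2 : (R2.arcs.erase (u1, w1)).erase (w1, x1) =
            insert (u2, x2) ((((N.arcs.erase (u2, w2)).erase (w2, x2)).erase
              (u1, w1)).erase (w1, x1)) := by
          rw [hR2]
          show ((insert (u2, x2) ((N.arcs.erase (u2, w2)).erase (w2, x2))).erase
            (u1, w1)).erase (w1, x1) = _
          rw [Finset.erase_insert_of_ne (by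
            rw [Ne, Prod.mk.injEq]; rintro ⟨-, h⟩; exact hc2 h),
            Finset.erase_insert_of_ne (by
            rw [Ne, Prod.mk.injEq]; rintro ⟨h, -⟩; exact hu2w1 h)]
        rw [e1, e2, Finset.insert_comm]
        congr 2
        ext y; simp only [Finset.mem_erase]; tauto
    rw [← heq]
    exact stepAt_suppStep s2

/-- Strip lemma: a single suppression step can be pushed past a full suppression. -/
theorem strip : ∀ n (R M T : Net), R.verts.card ≤ n → Inv R → SuppStep R M →
    Relation.ReflTransGen SuppStep R T →
    (∀ w ∈ T.verts, ¬(T.indeg w = 1 ∧ T.outdeg w = 1)) →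
    Relation.ReflTransGen SuppStep M T := by
  intro n
  induction n with
  | zero =>
    intro R M T hc hI hRM hRT hT
    obtain ⟨u, w, x, hs, rfl⟩ := suppStep_iff.1 hRM
    have hw : w ∈ R.verts := (hI.1 _ hs.1).2
    have := Finset.card_pos.2 ⟨w, hw⟩
    omega
  | succ n ih =>
    intro R M T hc hI hRM hRT hT
    rcases Relation.ReflTransGen.cases_head hRT with rfl | ⟨R1, hRR1, hR1T⟩
    · obtain ⟨u, w, x, hs, rfl⟩ := suppStep_iff.1 hRM
      exact absurd ⟨hs.2.2.1, hs.2.2.2⟩ (hT w ((hI.1 _ hs.1).2))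
    · obtain ⟨u1, w1, x1, hs1, rfl⟩ := suppStep_iff.1 hRM
      obtain ⟨u2, w2, x2, hs2, rfl⟩ := suppStep_iff.1 hRR1
      by_cases hww : w1 = w2
      · subst hww
        rw [suppstep_det hs1 hs2]
        exact hR1T
      · obtain ⟨Z, hZ1, hZ2⟩ := diamond hI hs1 hs2 hww
        have hI2 : Inv (result R u2 w2 x2) := suppstep_inv hI (stepAt_suppStep hs2)
        have hcard : (result R u2 w2 x2).verts.card ≤ n := by
          have := suppstep_card hI (stepAt_suppStep hs2); omega
        exact Relation.ReflTransGen.head hZ1 (ih _ _ _ hcard hI2 hZ2 hR1T hT)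

theorem suppresses_of_step {R M T : Net} (hI : Inv R) (hRM : SuppStep R M)
    (h : Suppresses R T) : Suppresses M T :=
  ⟨strip _ R M T le_rfl hI hRM h.1 h.2, h.2⟩

theorem suppresses_head {R M T : Net} (hRM : SuppStep R M)
    (h : Suppresses M T) : Suppresses R T :=
  ⟨Relation.ReflTransGen.head hRM h.1, h.2⟩

/-- Monotone transfer of paths along arc/vertex inclusion. -/
theorem path_mono {R N : Net} (ha : ∀ a b, R.ArcRel a b → N.ArcRel a b)
    (hv : R.verts ⊆ N.verts) {x y : ℕ} {p : List ℕ}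
    (hp : R.IsPathFromTo x y p) : N.IsPathFromTo x y p :=
  ⟨⟨hp.1.1, List.IsChain.imp ha hp.1.2.1, fun u hu => hv (hp.1.2.2 u hu)⟩, hp.2.1, hp.2.2⟩

theorem reach_mono {R N : Net} (ha : ∀ a b, R.ArcRel a b → N.ArcRel a b) {x y : ℕ}
    (h : R.Reach x y) : N.Reach x y :=
  Relation.ReflTransGen.mono ha _ _ h

theorem cherryRed_arcRel {N : Net} {S : Finset ℕ} {z : ℕ} {a b : ℕ} :
    (N.cherryRed S z).ArcRel a b ↔ (a, b) ∈ N.arcs ∧ a ∉ S.erase z ∧ b ∉ S.erase z := by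
  show (a, b) ∈ Finset.filter _ _ ↔ _
  rw [Finset.mem_filter]

theorem cherryRed_reach {N : Net} {S : Finset ℕ} {z : ℕ}
    (hleaf : ∀ b ∈ S.erase z, N.outdeg b = 0) {a b : ℕ}
    (hb : b ∉ S.erase z) (h : N.Reach a b) : (N.cherryRed S z).Reach a b := by
  induction h using Relation.ReflTransGen.head_induction_on with
  | refl => exact Relation.ReflTransGen.refl
  | head hac hcb ih =>
    rename_i a' c
    have hc : c ∉ S.erase z := by
      intro hcB
      exact hb ((eq_of_outdeg_zero_reach (hleaf c hcB) hcb) ▸ hcB)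
    have ha' : a' ∉ S.erase z := by
      intro haB
      exact absurd (outdeg_pos_of_mem hac) (by rw [hleaf a' haB]; omega)
    exact Relation.ReflTransGen.head (cherryRed_arcRel.2 ⟨hac, ha', hc⟩) ih

theorem cherryRed_path {N : Net} {S : Finset ℕ} {z : ℕ}
    (hleaf : ∀ b ∈ S.erase z, N.outdeg b = 0) {x y : ℕ} {p : List ℕ}
    (hy : y ∉ S.erase z) (hp : N.IsPathFromTo x y p) :
    (N.cherryRed S z).IsPathFromTo x y p := by
  have havoid : ∀ u ∈ p, u ∉ S.erase z := by
    intro u hu hB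
    exact path_avoid_sink hp (hleaf u hB) (fun h => hy (h ▸ hB)) hu
  obtain ⟨⟨hne, hch, hmem⟩, hh, hl⟩ := hp
  refine ⟨⟨hne, ?_, ?_⟩, hh, hl⟩
  · exact chain'_imp_mem hch (fun a ha b hb hab =>
      cherryRed_arcRel.2 ⟨hab, havoid a ha, havoid b hb⟩)
  · intro u hu
    exact Finset.mem_sdiff.2 ⟨hmem u hu, havoid u hu⟩

theorem cherryRed_all {N : Net} {X S : Finset ℕ} {z : ℕ}
    (hphy : N.IsPhyloNet X) (hnest : N.OneNested)
    (hch : N.IsCherry X S) (hz : z ∈ S) (hniso : ¬ N.IsIsolatedCherry X S) :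
    (N.cherryRed S z).IsPhyloNet (X \ S.erase z) ∧
    (N.cherryRed S z).OneNested ∧
    ∀ Y : Finset ℕ, Y.card = 3 → ∀ T : Net,
      ((Y ⊆ X \ S.erase z ∧ (N.cherryRed S z).Displays Y T) ↔
        (Y ⊆ X ∧ N.Displays Y T ∧ (S ∩ Y = ∅ ∨ S ∩ Y = {z}))) := by
  classical
  obtain ⟨hA, hacyc, hrv, hri, hsrc, hXV, hleafiff, htree, hhyb⟩ := hphy
  obtain ⟨hS2, hSX, vS, hvSv, hvSarc, hvSnoarc⟩ := hch
  have hSleaf : ∀ s ∈ S, N.indeg s = 1 ∧ N.outdeg s = 0 := by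
    intro s hs
    exact (hleafiff s (hXV (hSX hs))).2 (hSX hs)
  have hBleaf : ∀ b ∈ S.erase z, N.outdeg b = 0 :=
    fun b hb => (hSleaf b (Finset.mem_of_mem_erase hb)).2
  have hBleaf1 : ∀ b ∈ S.erase z, N.indeg b = 1 :=
    fun b hb => (hSleaf b (Finset.mem_of_mem_erase hb)).1
  have hparent : ∀ {a s : ℕ}, s ∈ S → (a, s) ∈ N.arcs → a = vS :=
    fun hs ha => indeg_one_unique (hSleaf _ hs).1 ha (hvSarc _ hs)
  have harcsB : ∀ a b : ℕ, (a, b) ∈ N.arcs → a ∉ S.erase z := by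
    intro a b h hB
    have := outdeg_pos_of_mem h
    rw [hBleaf a hB] at this
    omega
  set R := N.cherryRed S z with hRdef
  have hRarcs : ∀ a b : ℕ, (a, b) ∈ R.arcs ↔
      (a, b) ∈ N.arcs ∧ a ∉ S.erase z ∧ b ∉ S.erase z := fun a b => cherryRed_arcRel
  have hRsub : ∀ a : ℕ × ℕ, a ∈ R.arcs → a ∈ N.arcs := by
    intro a ha
    exact (Finset.mem_filter.1 ha).1
  have hRverts : ∀ w : ℕ, w ∈ R.verts ↔ w ∈ N.verts ∧ w ∉ S.erase z :=
    fun w => Finset.mem_sdiff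
  have hRroot : R.root = N.root := rfl
  have hindeg : ∀ v, v ∉ S.erase z → R.indeg v = N.indeg v := by
    intro v hv
    unfold indeg
    congr 1
    ext ⟨a1, a2⟩
    simp only [Finset.mem_filter]
    constructor
    · rintro ⟨hm, h2⟩
      exact ⟨hRsub _ hm, h2⟩
    · rintro ⟨hm, h2⟩
      exact ⟨(hRarcs a1 a2).2 ⟨hm, harcsB _ _ hm, by rwa [h2]⟩, h2⟩
  have hvS_not_S : vS ∉ S := by
    intro h
    have := outdeg_pos_of_mem (hvSarc z hz)
    rw [(hSleaf vS h).2] at this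
    omega
  have houtdeg : ∀ v, v ≠ vS → R.outdeg v = N.outdeg v := by
    intro v hv
    unfold outdeg
    congr 1
    ext ⟨a1, a2⟩
    simp only [Finset.mem_filter]
    constructor
    · rintro ⟨hm, h2⟩
      exact ⟨hRsub _ hm, h2⟩
    · rintro ⟨hm, h2⟩
      refine ⟨(hRarcs a1 a2).2 ⟨hm, harcsB _ _ hm, ?_⟩, h2⟩
      intro hB
      exact hv (by rw [← h2]; exact hparent (Finset.mem_of_mem_erase hB) hm)
  have houtS : S.card ≤ N.outdeg vS := by
    refine Finset.card_le_card_of_injOn (fun s => (vS, s)) ?_ ?_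
    · intro s hs
      exact Finset.mem_filter.2 ⟨hvSarc s hs, rfl⟩
    · intro s _ t _ h
      exact (Prod.ext_iff.1 h).2
  have houtvS : R.outdeg vS = N.outdeg vS - (S.erase z).card := by
    unfold outdeg
    have himg : (S.erase z).image (fun s => (vS, s)) ⊆
        N.arcs.filter (fun a => a.1 = vS) := by
      intro a ha
      obtain ⟨s, hs, rfl⟩ := Finset.mem_image.1 ha
      exact Finset.mem_filter.2 ⟨hvSarc s (Finset.mem_of_mem_erase hs), rfl⟩
    have heq : R.arcs.filter (fun a => a.1 = vS) =
        N.arcs.filter (fun a => a.1 = vS) \ (S.erase z).image (fun s => (vS, s)) := by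
      ext ⟨a1, a2⟩
      simp only [Finset.mem_sdiff, Finset.mem_filter, Finset.mem_image, Prod.mk.injEq]
      constructor
      · rintro ⟨hm, h1⟩
        refine ⟨⟨hRsub _ hm, h1⟩, ?_⟩
        rintro ⟨s, hs, -, rfl⟩
        exact ((hRarcs _ _).1 hm).2.2 hs
      · rintro ⟨⟨hm, h1⟩, hnim⟩
        refine ⟨(hRarcs a1 a2).2 ⟨hm, harcsB _ _ hm, ?_⟩, h1⟩
        intro hB
        exact hnim ⟨a2, hB, h1.symm, rfl⟩
    rw [heq, Finset.card_sdiff_of_subset himg, Finset.card_image_of_injOn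
      (fun s _ t _ h => (Prod.ext_iff.1 h).2)]
  have hBcard : (S.erase z).card = S.card - 1 := Finset.card_erase_of_mem hz
  have houtvS1 : 1 ≤ R.outdeg vS := by omega
  have hvS_tree : N.indeg vS = 1 → 2 ≤ R.outdeg vS := by
    intro hin
    have hne : N.outdeg vS ≠ S.card := by
      intro h
      exact hniso ⟨hS2, hSX, vS, ⟨hvSv, hvSarc, hvSnoarc⟩, h, hin⟩
    omega
  have hroot_notB : N.root ∉ S.erase z := by
    intro h
    rw [hBleaf1 _ h] at hri
    omega
  -- the nine phylogenetic-network conditions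
  have hphyR : R.IsPhyloNet (X \ S.erase z) := by
    refine ⟨?_, ?_, ?_, ?_, ?_, ?_, ?_, ?_, ?_⟩
    · rintro ⟨a1, a2⟩ ha
      obtain ⟨hm, h1, h2⟩ := (hRarcs a1 a2).1 ha
      exact ⟨(hRverts a1).2 ⟨(hA _ hm).1, h1⟩, (hRverts a2).2 ⟨(hA _ hm).2, h2⟩⟩
    · intro v hv
      exact hacyc v (Relation.TransGen.mono (fun a b h => ((hRarcs a b).1 h).1) _ _ hv)
    · exact (hRverts _).2 ⟨hrv, hroot_notB⟩
    · rw [hRroot, hindeg _ hroot_notB]; exact hri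
    · intro v hv h0
      obtain ⟨hvN, hvB⟩ := (hRverts v).1 hv
      rw [hindeg v hvB] at h0
      exact hsrc v hvN h0
    · intro x hx
      obtain ⟨hx1, hx2⟩ := Finset.mem_sdiff.1 hx
      exact (hRverts x).2 ⟨hXV hx1, hx2⟩
    · intro v hv
      obtain ⟨hvN, hvB⟩ := (hRverts v).1 hv
      by_cases hveq : v = vS
      · subst hveq
        constructor
        · rintro ⟨-, h0⟩
          omega
        · intro hmem
          have hvX := (Finset.mem_sdiff.1 hmem).1
          have := ((hleafiff _ hvN).2 hvX).2
          omega
      · unfold IsLeaf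
        rw [hindeg v hvB, houtdeg v hveq]
        rw [show (v ∈ X \ S.erase z) ↔ (v ∈ X ∧ v ∉ S.erase z) from Finset.mem_sdiff]
        constructor
        · intro h
          exact ⟨(hleafiff v hvN).1 h, hvB⟩
        · intro h
          exact (hleafiff v hvN).2 h.1
    · intro v hv hvroot ho hi
      obtain ⟨hvN, hvB⟩ := (hRverts v).1 hv
      by_cases hveq : v = vS
      · subst hveq
        exact hvS_tree (by rw [← hindeg _ hvB]; exact hi)
      · rw [houtdeg v hveq] at ho ⊢
        rw [hindeg v hvB] at hi
        exact htree v hvN hvroot ho hi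
    · intro v hv hi
      obtain ⟨hvN, hvB⟩ := (hRverts v).1 hv
      by_cases hveq : v = vS
      · subst hveq; omega
      · rw [houtdeg v hveq]
        rw [hindeg v hvB] at hi
        exact hhyb v hvN hi
  have hcycR : ∀ C : Finset ℕ, R.IsCycle C → N.IsCycle C := by
    rintro C ⟨n, hn, f, hf, hfim, hadj⟩
    refine ⟨n, hn, f, hf, hfim, fun i => ?_⟩
    rcases hadj i with h | h
    · exact Or.inl (hRsub _ h)
    · exact Or.inr (hRsub _ h)
  have hnestR : R.OneNested := fun C1 C2 h1 h2 hne =>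
    hnest C1 C2 (hcycR C1 h1) (hcycR C2 h2) hne
  -- transfer of paths, reach, LCA, restriction
  have hpathNR : ∀ {x y : ℕ} {p : List ℕ}, y ∉ S.erase z →
      N.IsPathFromTo x y p → R.IsPathFromTo x y p :=
    fun hy hp => cherryRed_path hBleaf hy hp
  have hpathRN : ∀ {x y : ℕ} {p : List ℕ}, R.IsPathFromTo x y p → N.IsPathFromTo x y p :=
    fun hp => path_mono (fun a b h => ((hRarcs a b).1 h).1) (fun w hw => ((hRverts w).1 hw).1) hp
  have hreachroot : ∀ y ∈ X, ∃ p, N.IsPathFromTo N.root y p :=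
    fun y hy => (reach_iff_path hA hrv).1 (reach_root hA hacyc hsrc y (hXV hy))
  have hLCA : ∀ (Y : Finset ℕ), (∀ y ∈ Y, y ∈ X ∧ y ∉ S.erase z) → Y.Nonempty →
      ∀ v, (N.IsLCA Y v ↔ R.IsLCA Y v) := by
    intro Y hY ⟨y0, hy0⟩ v
    have hnotB : ∀ w, N.OnAllRootPaths Y w → w ∉ S.erase z := by
      intro w hw hB
      obtain ⟨p0, hp0⟩ := hreachroot y0 (hY y0 hy0).1
      exact path_avoid_sink hp0 (hBleaf w hB)
        (fun h => (hY y0 hy0).2 (h ▸ hB)) (hw y0 hy0 p0 hp0)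
    have honNR : ∀ w, N.OnAllRootPaths Y w → R.OnAllRootPaths Y w := by
      intro w hw y hy p hp
      exact hw y hy p (hpathRN hp)
    have honRN : ∀ w, R.OnAllRootPaths Y w → N.OnAllRootPaths Y w := by
      intro w hw y hy p hp
      exact hw y hy p (hpathNR (hY y hy).2 hp)
    constructor
    · rintro ⟨hvV, hvY, hvon, hvmax⟩
      have hvB := hnotB v hvon
      refine ⟨(hRverts v).2 ⟨hvV, hvB⟩, hvY, honNR v hvon, ?_⟩
      intro w hwV hwY hwon
      exact cherryRed_reach hBleaf hvB (hvmax w ((hRverts w).1 hwV).1 hwY (honRN w hwon))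
    · rintro ⟨hvV, hvY, hvon, hvmax⟩
      refine ⟨((hRverts v).1 hvV).1, hvY, honRN v hvon, ?_⟩
      intro w hwV hwY hwon
      have hwB := hnotB w hwon
      exact reach_mono (fun a b h => ((hRarcs a b).1 h).1)
        (hvmax w ((hRverts w).2 ⟨hwV, hwB⟩) hwY (honNR w hwon))
  have hres : ∀ (Y : Finset ℕ) (v : ℕ), (∀ y ∈ Y, y ∈ X ∧ y ∉ S.erase z) →
      v ∉ S.erase z → N.restrictTo v Y = R.restrictTo v Y := by
    intro Y v hY hvB
    have hkey : ∀ w, w ∉ S.erase z → ∀ y ∈ Y, (N.Reach w y ↔ R.Reach w y) := by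
      intro w hw y hy
      exact ⟨fun h => cherryRed_reach hBleaf (hY y hy).2 h,
        fun h => reach_mono (fun a b h' => ((hRarcs a b).1 h').1) h⟩
    have hWnotB : ∀ w y, y ∈ Y → N.Reach w y → w ∉ S.erase z := by
      intro w y hy hr hB
      exact (hY y hy).2 ((eq_of_outdeg_zero_reach (hBleaf w hB) hr) ▸ hB)
    refine net_ext ?_ ?_ rfl
    · ext w
      show w ∈ N.verts.filter _ ↔ w ∈ R.verts.filter _
      simp only [Finset.mem_filter]
      constructor
      · rintro ⟨hwV, hwr, y, hy, hwy⟩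
        have hwB := hWnotB w y hy hwy
        exact ⟨(hRverts w).2 ⟨hwV, hwB⟩, cherryRed_reach hBleaf hwB hwr,
          y, hy, (hkey w hwB y hy).1 hwy⟩
      · rintro ⟨hwV, hwr, y, hy, hwy⟩
        exact ⟨((hRverts w).1 hwV).1,
          reach_mono (fun a b h' => ((hRarcs a b).1 h').1) hwr,
          y, hy, reach_mono (fun a b h' => ((hRarcs a b).1 h').1) hwy⟩
    · ext ⟨a1, a2⟩
      show (a1, a2) ∈ N.arcs.filter _ ↔ (a1, a2) ∈ R.arcs.filter _
      simp only [Finset.mem_filter]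
      constructor
      · rintro ⟨hm, hra, y, hy, hwy⟩
        have h2B := hWnotB a2 y hy hwy
        have h1B := harcsB _ _ hm
        exact ⟨(hRarcs a1 a2).2 ⟨hm, h1B, h2B⟩, cherryRed_reach hBleaf h1B hra,
          y, hy, (hkey a2 h2B y hy).1 hwy⟩
      · rintro ⟨hm, hra, y, hy, hwy⟩
        exact ⟨hRsub _ hm, reach_mono (fun a b h' => ((hRarcs a b).1 h').1) hra,
          y, hy, reach_mono (fun a b h' => ((hRarcs a b).1 h').1) hwy⟩
  refine ⟨hphyR, hnestR, ?_⟩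
  intro Y hY3 T
  have hYne : Y.card = 3 → Y.Nonempty := by
    intro h
    rw [← Finset.card_pos, h]; omega
  constructor
  · rintro ⟨hYsub, hdisp⟩
    have hY' : ∀ y ∈ Y, y ∈ X ∧ y ∉ S.erase z := by
      intro y hy
      exact Finset.mem_sdiff.1 (hYsub hy)
    refine ⟨fun y hy => (hY' y hy).1, ?_, ?_⟩
    · obtain ⟨v, hvlca, T0, hsup, hiso⟩ := hdisp
      have hvlcaN := (hLCA Y hY' (hYne hY3) v).2 hvlca
      refine ⟨v, hvlcaN, T0, ?_, hiso⟩
      have hvB : v ∉ S.erase z := ((hRverts v).1 hvlca.1).2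
      rw [hres Y v hY' hvB]
      exact hsup
    · have hsub : S ∩ Y ⊆ {z} := by
        intro s hs
        obtain ⟨hs1, hs2⟩ := Finset.mem_inter.1 hs
        rcases eq_or_ne s z with h | h
        · simp [h]
        · exact absurd (Finset.mem_erase.2 ⟨h, hs1⟩) (hY' s hs2).2
      rcases Finset.subset_singleton_iff.1 hsub with h | h
      · exact Or.inl h
      · exact Or.inr h
  · rintro ⟨hYX, hdisp, hcond⟩
    have hY' : ∀ y ∈ Y, y ∈ X ∧ y ∉ S.erase z := by
      intro y hy
      refine ⟨hYX hy, fun hB => ?_⟩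
      have : y ∈ S ∩ Y := Finset.mem_inter.2 ⟨Finset.mem_of_mem_erase hB, hy⟩
      rcases hcond with h | h
      · rw [h] at this; simp at this
      · rw [h] at this
        exact (Finset.mem_erase.1 hB).1 (Finset.mem_singleton.1 this)
    refine ⟨fun y hy => Finset.mem_sdiff.2 (hY' y hy), ?_⟩
    obtain ⟨v, hvlca, T0, hsup, hiso⟩ := hdisp
    have hvB : v ∉ S.erase z := by
      obtain ⟨y0, hy0⟩ := hYne hY3
      obtain ⟨p0, hp0⟩ := hreachroot y0 (hY' y0 hy0).1
      intro hB
      exact path_avoid_sink hp0 (hBleaf v hB)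
        (fun h => (hY' y0 hy0).2 (h ▸ hB)) (hvlca.2.2.1 y0 hy0 p0 hp0)
    refine ⟨v, (hLCA Y hY' (hYne hY3) v).1 hvlca, T0, ?_, hiso⟩
    rw [← hres Y v hY' hvB]
    exact hsup

theorem isoCherryRed_all {N : Net} {X S : Finset ℕ} {z vS : ℕ}
    (hphy : N.IsPhyloNet X) (hnest : N.OneNested)
    (hS2 : 2 ≤ S.card) (hSX : S ⊆ X) (hz : z ∈ S)
    (hvSv : vS ∈ N.verts) (hvSarc : ∀ s ∈ S, (vS, s) ∈ N.arcs)
    (hout : N.outdeg vS = S.card) (hin : N.indeg vS = 1) :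
    (N.isoCherryRed S z vS).IsPhyloNet (X \ S.erase z) ∧
    (N.isoCherryRed S z vS).OneNested ∧
    ∀ Y : Finset ℕ, Y.card = 3 → ∀ T : Net,
      ((Y ⊆ X \ S.erase z ∧ (N.isoCherryRed S z vS).Displays Y T) ↔
        (Y ⊆ X ∧ N.Displays Y T ∧ (S ∩ Y = ∅ ∨ S ∩ Y = {z}))) := by
  classical
  obtain ⟨hA, hacyc, hrv, hri, hsrc, hXV, hleafiff, htree, hhyb⟩ := hphy
  have hSleaf : ∀ s ∈ S, N.indeg s = 1 ∧ N.outdeg s = 0 := by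
    intro s hs
    exact (hleafiff s (hXV (hSX hs))).2 (hSX hs)
  have harcsS : ∀ a b : ℕ, (a, b) ∈ N.arcs → a ∉ S := by
    intro a b h hs
    have := outdeg_pos_of_mem h
    rw [(hSleaf a hs).2] at this
    omega
  have hparent : ∀ {a s : ℕ}, s ∈ S → (a, s) ∈ N.arcs → a = vS :=
    fun hs ha => indeg_one_unique (hSleaf _ hs).1 ha (hvSarc _ hs)
  have hvS_not_S : vS ∉ S := harcsS vS z (hvSarc z hz)
  have hzvS : z ≠ vS := fun h => hvS_not_S (h ▸ hz)
  have hzV : z ∈ N.verts := hXV (hSX hz)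
  have hrninj : ∀ b2 c2 : ℕ, b2 ≠ z → c2 ≠ z → rn vS z b2 = rn vS z c2 → b2 = c2 := by
    intro b2 c2 hb hc h
    unfold rn at h
    by_cases h1 : b2 = vS
    · by_cases h2 : c2 = vS
      · rw [h1, h2]
      · rw [if_pos h1, if_neg h2] at h; exact absurd h.symm hc
    · by_cases h2 : c2 = vS
      · rw [if_neg h1, if_pos h2] at h; exact absurd h hb
      · rwa [if_neg h1, if_neg h2] at h
  have houtchar : ∀ b : ℕ, (vS, b) ∈ N.arcs → b ∈ S := by
    intro b hb
    have himg : S.image (fun s => (vS, s)) ⊆ N.arcs.filter (fun a => a.1 = vS) := by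
      intro a ha
      obtain ⟨s, hs, rfl⟩ := Finset.mem_image.1 ha
      exact Finset.mem_filter.2 ⟨hvSarc s hs, rfl⟩
    have hcards : (N.arcs.filter (fun a => a.1 = vS)).card ≤ (S.image (fun s => (vS, s))).card := by
      rw [Finset.card_image_of_injOn (fun s _ t _ h => (Prod.ext_iff.1 h).2)]
      rw [← hout]
      exact le_rfl
    have heq := Finset.eq_of_subset_of_card_le himg hcards
    have : (vS, b) ∈ S.image (fun s => (vS, s)) := by
      rw [heq]
      exact Finset.mem_filter.2 ⟨hb, rfl⟩
    obtain ⟨s, hs, hsb⟩ := Finset.mem_image.1 this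
    injection hsb with h1 h2
    rw [← h2]
    exact hs
  have hrootvS : N.root ≠ vS := by
    intro h
    rw [← h] at hin
    omega
  have hroot_notS : N.root ∉ S := by
    intro h
    rw [(hSleaf _ h).1] at hri
    omega
  obtain ⟨u, hu⟩ := exists_in_arc (N := N) (b := vS) (by omega)
  have huS : u ∉ S := harcsS _ _ hu
  have huvS : u ≠ vS := by
    rintro rfl
    exact hacyc u (Relation.TransGen.single hu)
  have huV : u ∈ N.verts := (hA _ hu).1
  have hu_uniq : ∀ a : ℕ, (a, vS) ∈ N.arcs → a = u := fun a ha => indeg_one_unique hin ha hu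
  set R := N.isoCherryRed S z vS with hRdef
  have hRroot : R.root = N.root := by
    show rn vS z N.root = N.root
    unfold rn
    rw [if_neg hrootvS]
  -- arc characterization
  have hRarcs : ∀ a b : ℕ, (a, b) ∈ R.arcs ↔
      ((a, b) ∈ N.arcs ∧ a ∉ S ∧ a ≠ vS ∧ b ∉ S ∧ b ≠ vS) ∨
      (b = z ∧ (a, vS) ∈ N.arcs ∧ a ∉ S ∧ a ≠ vS) := by
    intro a b
    show (a, b) ∈ Finset.image _ (Finset.filter _ _) ↔ _
    rw [Finset.mem_image]
    constructor
    · rintro ⟨⟨a', b'⟩, hm, heq⟩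
      obtain ⟨hm', ha', hb'⟩ := Finset.mem_filter.1 hm
      simp only at ha' hb'
      rw [Prod.ext_iff] at heq
      obtain ⟨he1, he2⟩ := heq
      simp only at he1 he2
      have ha'vS : a' ≠ vS := by
        rintro rfl
        exact hb' (houtchar b' hm')
      have hrna : rn vS z a' = a' := by unfold rn; rw [if_neg ha'vS]
      rw [hrna] at he1
      subst he1
      by_cases hb'vS : b' = vS
      · subst hb'vS
        right
        refine ⟨?_, hm', ha', ha'vS⟩
        rw [← he2]; unfold rn; rw [if_pos rfl]
      · have hrnb : rn vS z b' = b' := by unfold rn; rw [if_neg hb'vS]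
        rw [hrnb] at he2
        subst he2
        exact Or.inl ⟨hm', ha', ha'vS, hb', hb'vS⟩
    · rintro (⟨hm, haS, havS, hbS, hbvS⟩ | ⟨hbz, hm, haS, havS⟩)
      · refine ⟨(a, b), Finset.mem_filter.2 ⟨hm, haS, hbS⟩, ?_⟩
        rw [Prod.ext_iff]
        constructor
        · show rn vS z a = a
          unfold rn; rw [if_neg havS]
        · show rn vS z b = b
          unfold rn; rw [if_neg hbvS]
      · rw [hbz]
        refine ⟨(a, vS), Finset.mem_filter.2 ⟨hm, haS, hvS_not_S⟩, ?_⟩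
        rw [Prod.ext_iff]
        constructor
        · show rn vS z a = a
          unfold rn; rw [if_neg havS]
        · show rn vS z vS = z
          unfold rn; rw [if_pos rfl]
  have hRverts : ∀ w : ℕ, w ∈ R.verts ↔ (w ∈ N.verts ∧ w ∉ S ∧ w ≠ vS) ∨ w = z := by
    intro w
    show w ∈ Finset.image _ _ ↔ _
    rw [Finset.mem_image]
    constructor
    · rintro ⟨w', hm, heq⟩
      obtain ⟨hw'V, hw'S⟩ := Finset.mem_sdiff.1 hm
      by_cases hw'vS : w' = vS
      · subst hw'vS
        right
        rw [← heq]; unfold rn; rw [if_pos rfl]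
      · left
        have : rn vS z w' = w' := by unfold rn; rw [if_neg hw'vS]
        rw [this] at heq
        subst heq
        exact ⟨hw'V, hw'S, hw'vS⟩
    · rintro (⟨hwV, hwS, hwvS⟩ | rfl)
      · exact ⟨w, Finset.mem_sdiff.2 ⟨hwV, hwS⟩, by unfold rn; rw [if_neg hwvS]⟩
      · exact ⟨vS, Finset.mem_sdiff.2 ⟨hvSv, hvS_not_S⟩, by unfold rn; rw [if_pos rfl]⟩
  have hznR : z ∈ R.verts := (hRverts z).2 (Or.inr rfl)
  -- degree computations
  have hRindeg_z : R.indeg z = 1 := by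
    have hf : R.arcs.filter (fun a => a.2 = z) = {(u, z)} := by
      ext ⟨a1, a2⟩
      simp only [Finset.mem_filter, Finset.mem_singleton, Prod.mk.injEq]
      constructor
      · rintro ⟨hm, heq⟩
        rw [heq] at hm
        rcases (hRarcs a1 z).1 hm with ⟨-, -, -, hzS, -⟩ | ⟨-, hm', -, -⟩
        · exact absurd hz hzS
        · exact ⟨hu_uniq a1 hm', heq⟩
      · rintro ⟨ha, hb⟩
        rw [ha, hb]
        exact ⟨(hRarcs u z).2 (Or.inr ⟨rfl, hu, huS, huvS⟩), rfl⟩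
    unfold indeg
    rw [hf, Finset.card_singleton]
  have hRoutdeg_z : R.outdeg z = 0 := by
    have hf : R.arcs.filter (fun a => a.1 = z) = ∅ := by
      rw [Finset.eq_empty_iff_forall_notMem]
      rintro ⟨a1, a2⟩ hmem
      obtain ⟨hm, heq⟩ := Finset.mem_filter.1 hmem
      simp only at heq
      rw [heq] at hm
      rcases (hRarcs z a2).1 hm with ⟨-, hzS, -⟩ | ⟨-, -, hzS, -⟩ <;> exact hzS hz
    unfold outdeg
    rw [hf, Finset.card_empty]
  have hRindeg_w : ∀ w, w ∉ S → w ≠ vS → w ≠ z → R.indeg w = N.indeg w := by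
    intro w hwS hwvS hwz
    unfold indeg
    congr 1
    ext ⟨a1, a2⟩
    simp only [Finset.mem_filter]
    constructor
    · rintro ⟨hm, heq⟩
      rw [heq] at hm
      rcases (hRarcs a1 w).1 hm with ⟨hm', -⟩ | ⟨hzz, -⟩
      · exact ⟨by rw [heq]; exact hm', heq⟩
      · exact absurd hzz hwz
    · rintro ⟨hm, heq⟩
      rw [heq] at hm ⊢
      have ha1vS : a1 ≠ vS := by
        rintro rfl
        exact hwS (houtchar w hm)
      exact ⟨(hRarcs a1 w).2 (Or.inl ⟨hm, harcsS _ _ hm, ha1vS, hwS, hwvS⟩), rfl⟩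
  have hRoutdeg_w : ∀ w, w ∉ S → w ≠ vS → w ≠ z → R.outdeg w = N.outdeg w := by
    intro w hwS hwvS hwz
    have hf : R.arcs.filter (fun a => a.1 = w) =
        (N.arcs.filter (fun a => a.1 = w)).image (fun a => (a.1, rn vS z a.2)) := by
      ext ⟨a1, a2⟩
      simp only [Finset.mem_filter, Finset.mem_image, Prod.mk.injEq]
      constructor
      · rintro ⟨hm, heq⟩
        rw [heq] at hm
        rcases (hRarcs w a2).1 hm with ⟨hm', -, -, -, ha2vS⟩ | ⟨rfl, hm', -, -⟩
        · exact ⟨(w, a2), ⟨hm', rfl⟩, heq.symm, by unfold rn; rw [if_neg ha2vS]⟩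
        · exact ⟨(w, vS), ⟨hm', rfl⟩, heq.symm, by unfold rn; rw [if_pos rfl]⟩
      · rintro ⟨⟨b1, b2⟩, ⟨hm, hb1⟩, he1, he2⟩
        simp only at hb1
        subst hb1
        rw [← he1, ← he2]
        by_cases hb2vS : b2 = vS
        · rw [hb2vS] at hm ⊢
          have hrnz : rn vS z vS = z := by unfold rn; rw [if_pos rfl]
          rw [hrnz]
          exact ⟨(hRarcs _ _).2 (Or.inr ⟨rfl, hm, hwS, hwvS⟩), rfl⟩
        · have hrnb : rn vS z b2 = b2 := by unfold rn; rw [if_neg hb2vS]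
          rw [hrnb]
          have hb2S : b2 ∉ S := by
            intro h
            exact hwvS (hparent h hm)
          exact ⟨(hRarcs _ _).2 (Or.inl ⟨hm, hwS, hwvS, hb2S, hb2vS⟩), rfl⟩
    unfold outdeg
    rw [hf, Finset.card_image_of_injOn]
    rintro ⟨b1, b2⟩ hb ⟨c1, c2⟩ hc heq
    obtain ⟨hbm, hb1⟩ := Finset.mem_filter.1 hb
    obtain ⟨hcm, hc1⟩ := Finset.mem_filter.1 hc
    rw [Prod.ext_iff] at heq
    obtain ⟨he1, he2⟩ := heq
    simp only at he1 he2 hb1 hc1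
    have hb2z : b2 ≠ z := by
      rintro rfl
      exact hwvS (hb1 ▸ hparent hz hbm)
    have hc2z : c2 ≠ z := by
      rintro rfl
      exact hwvS (hc1 ▸ hparent hz hcm)
    rw [Prod.mk.injEq]
    exact ⟨by rw [hb1, hc1], hrninj b2 c2 hb2z hc2z he2⟩
  have hginj : ∀ b2 c2 : ℕ, b2 ≠ vS → c2 ≠ vS → rn z vS b2 = rn z vS c2 → b2 = c2 := by
    intro b2 c2 hb hc h
    unfold rn at h
    by_cases h1 : b2 = z
    · by_cases h2 : c2 = z
      · rw [h1, h2]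
      · rw [if_pos h1, if_neg h2] at h; exact absurd h.symm hc
    · by_cases h2 : c2 = z
      · rw [if_neg h1, if_pos h2] at h; exact absurd h hb
      · rwa [if_neg h1, if_neg h2] at h
  have harc_g : ∀ a b : ℕ, (a, b) ∈ R.arcs → (rn z vS a, rn z vS b) ∈ N.arcs := by
    intro a b h
    rcases (hRarcs a b).1 h with ⟨hm, haS, havS, hbS, hbvS⟩ | ⟨hbz, hm, haS, havS⟩
    · have haz : a ≠ z := fun h' => haS (h' ▸ hz)
      have hbz : b ≠ z := fun h' => hbS (h' ▸ hz)
      have e1 : rn z vS a = a := by unfold rn; rw [if_neg haz]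
      have e2 : rn z vS b = b := by unfold rn; rw [if_neg hbz]
      rw [e1, e2]; exact hm
    · have haz : a ≠ z := fun h' => haS (h' ▸ hz)
      have e1 : rn z vS a = a := by unfold rn; rw [if_neg haz]
      have e2 : rn z vS z = vS := by unfold rn; rw [if_pos rfl]
      rw [hbz, e1, e2]; exact hm
  have harcnovS : ∀ a b : ℕ, (a, b) ∈ R.arcs → a ≠ vS ∧ b ≠ vS := by
    intro a b h
    rcases (hRarcs a b).1 h with ⟨-, -, h1, -, h2⟩ | ⟨hbz, -, -, h1⟩
    · exact ⟨h1, h2⟩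
    · exact ⟨h1, by rw [hbz]; exact hzvS⟩
  have hRacyc : ∀ v, ¬ Relation.TransGen R.ArcRel v v := by
    intro v hv
    exact hacyc (rn z vS v) (Relation.TransGen.lift (p := N.ArcRel) (rn z vS) (fun a b h => harc_g a b h) _ _ hv)
  have hvSnotX : vS ∉ X := by
    intro h
    have := ((hleafiff vS hvSv).2 h).2
    omega
  have hrootz : N.root ≠ z := fun h => hroot_notS (h ▸ hz)
  have hzX' : z ∈ X \ S.erase z := by
    refine Finset.mem_sdiff.2 ⟨hSX hz, ?_⟩
    intro h
    exact (Finset.mem_erase.1 h).1 rfl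
  have hphyR : R.IsPhyloNet (X \ S.erase z) := by
    refine ⟨?_, hRacyc, ?_, ?_, ?_, ?_, ?_, ?_, ?_⟩
    · rintro ⟨a1, a2⟩ ha
      rcases (hRarcs a1 a2).1 ha with ⟨hm, haS, havS, hbS, hbvS⟩ | ⟨hbz, hm, haS, havS⟩
      · exact ⟨(hRverts a1).2 (Or.inl ⟨(hA _ hm).1, haS, havS⟩),
               (hRverts a2).2 (Or.inl ⟨(hA _ hm).2, hbS, hbvS⟩)⟩
      · exact ⟨(hRverts a1).2 (Or.inl ⟨(hA _ hm).1, haS, havS⟩),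
               (hRverts a2).2 (Or.inr hbz)⟩
    · rw [hRroot]
      exact (hRverts _).2 (Or.inl ⟨hrv, hroot_notS, hrootvS⟩)
    · rw [hRroot, hRindeg_w _ hroot_notS hrootvS hrootz]
      exact hri
    · intro v hv h0
      rcases (hRverts v).1 hv with ⟨hvV, hvS', hvvS⟩ | hvz
      · have hvz : v ≠ z := fun h => hvS' (h ▸ hz)
        rw [hRindeg_w v hvS' hvvS hvz] at h0
        rw [hRroot]
        exact hsrc v hvV h0
      · rw [hvz, hRindeg_z] at h0
        omega
    · intro x hx
      obtain ⟨hx1, hx2⟩ := Finset.mem_sdiff.1 hx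
      by_cases hxz : x = z
      · exact (hRverts x).2 (Or.inr hxz)
      · have hxS : x ∉ S := by
          intro h
          exact hx2 (Finset.mem_erase.2 ⟨hxz, h⟩)
        have hxvS : x ≠ vS := fun h => hvSnotX (h ▸ hx1)
        exact (hRverts x).2 (Or.inl ⟨hXV hx1, hxS, hxvS⟩)
    · intro v hv
      rcases (hRverts v).1 hv with ⟨hvV, hvS', hvvS⟩ | hvz
      · have hvz : v ≠ z := fun h => hvS' (h ▸ hz)
        unfold IsLeaf
        rw [hRindeg_w v hvS' hvvS hvz, hRoutdeg_w v hvS' hvvS hvz]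
        constructor
        · intro h
          refine Finset.mem_sdiff.2 ⟨(hleafiff v hvV).1 h, ?_⟩
          intro hmem
          exact hvS' (Finset.mem_of_mem_erase hmem)
        · intro h
          exact (hleafiff v hvV).2 (Finset.mem_sdiff.1 h).1
      · rw [hvz]
        unfold IsLeaf
        rw [hRindeg_z, hRoutdeg_z]
        constructor
        · intro _; exact hzX'
        · intro _; exact ⟨rfl, rfl⟩
    · intro v hv hvroot ho hi
      rcases (hRverts v).1 hv with ⟨hvV, hvS', hvvS⟩ | hvz
      · have hvz : v ≠ z := fun h => hvS' (h ▸ hz)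
        rw [hRoutdeg_w v hvS' hvvS hvz] at ho ⊢
        rw [hRindeg_w v hvS' hvvS hvz] at hi
        refine htree v hvV ?_ ho hi
        rw [hRroot] at hvroot
        exact hvroot
      · rw [hvz, hRoutdeg_z] at ho
        omega
    · intro v hv hi
      rcases (hRverts v).1 hv with ⟨hvV, hvS', hvvS⟩ | hvz
      · have hvz : v ≠ z := fun h => hvS' (h ▸ hz)
        rw [hRoutdeg_w v hvS' hvvS hvz]
        rw [hRindeg_w v hvS' hvvS hvz] at hi
        exact hhyb v hvV hi
      · rw [hvz, hRindeg_z] at hi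
        omega
  have hcycR : ∀ C : Finset ℕ, R.IsCycle C →
      N.IsCycle (C.image (rn z vS)) ∧ ∀ w ∈ C, w ≠ vS := by
    rintro C ⟨n, hn, f, hf, hfim, hadj⟩
    have hfnovS : ∀ i, f i ≠ vS := by
      intro i
      rcases hadj i with h | h
      · exact (harcnovS _ _ h).1
      · exact (harcnovS _ _ h).2
    constructor
    · refine ⟨n, hn, (rn z vS) ∘ f, ?_, ?_, ?_⟩
      · intro i j hij
        exact hf (hginj _ _ (hfnovS i) (hfnovS j) hij)
      · rw [← hfim, Finset.image_image]
      · intro i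
        rcases hadj i with h | h
        · exact Or.inl (harc_g _ _ h)
        · exact Or.inr (harc_g _ _ h)
    · intro w hw
      rw [← hfim] at hw
      obtain ⟨i, -, rfl⟩ := Finset.mem_image.1 hw
      exact hfnovS i
  have hnestR : R.OneNested := by
    intro C1 C2 h1 h2 hne
    obtain ⟨hc1, hn1⟩ := hcycR C1 h1
    obtain ⟨hc2, hn2⟩ := hcycR C2 h2
    have hinj12 : ∀ a ∈ C1 ∩ C2, ∀ b ∈ C1 ∩ C2, rn z vS a = rn z vS b → a = b := by
      intro a ha b hb h
      exact hginj a b (hn1 a (Finset.mem_inter.1 ha).1) (hn1 b (Finset.mem_inter.1 hb).1) h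
    have himne : C1.image (rn z vS) ≠ C2.image (rn z vS) := by
      intro h
      apply hne
      apply Finset.Subset.antisymm
      · intro a ha
        have : rn z vS a ∈ C2.image (rn z vS) := by
          rw [← h]
          exact Finset.mem_image_of_mem _ ha
        obtain ⟨b, hb, heq⟩ := Finset.mem_image.1 this
        rw [← hginj b a (hn2 b hb) (hn1 a ha) heq]
        exact hb
      · intro a ha
        have : rn z vS a ∈ C1.image (rn z vS) := by
          rw [h]
          exact Finset.mem_image_of_mem _ ha
        obtain ⟨b, hb, heq⟩ := Finset.mem_image.1 this
        rw [← hginj b a (hn1 b hb) (hn2 a ha) heq]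
        exact hb
    have hone := hnest _ _ hc1 hc2 himne
    calc (C1 ∩ C2).card = ((C1 ∩ C2).image (rn z vS)).card :=
          (Finset.card_image_of_injOn hinj12).symm
      _ ≤ (C1.image (rn z vS) ∩ C2.image (rn z vS)).card :=
          Finset.card_le_card (Finset.image_inter_subset _ _ _)
      _ ≤ 1 := hone
  -- path and reach transfers
  have hInvRes : ∀ (v : ℕ) (Y : Finset ℕ), Inv (N.restrictTo v Y) := by
    intro v Y
    constructor
    · rintro ⟨a1, a2⟩ ha
      obtain ⟨hm, hra, y, hy, hby⟩ := Finset.mem_filter.1 ha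
      constructor
      · exact Finset.mem_filter.2 ⟨(hA _ hm).1, hra, y, hy, Relation.ReflTransGen.head hm hby⟩
      · exact Finset.mem_filter.2 ⟨(hA _ hm).2, Relation.ReflTransGen.tail hra hm, y, hy, hby⟩
    · intro w hw
      exact hacyc w (Relation.TransGen.mono (fun a b h => (Finset.mem_filter.1 h).1) _ _ hw)
  have hpathP1 : ∀ {x y : ℕ} {p : List ℕ}, (∀ v ∈ p, v ∉ S ∧ v ≠ vS) →
      N.IsPathFromTo x y p → R.IsPathFromTo x y p := by
    intro x y p hav hp
    obtain ⟨⟨hne, hch, hmem⟩, hh, hl⟩ := hp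
    refine ⟨⟨hne, ?_, ?_⟩, hh, hl⟩
    · exact chain'_imp_mem hch (fun a ha b hb hab =>
        (hRarcs a b).2 (Or.inl ⟨hab, (hav a ha).1, (hav a ha).2, (hav b hb).1, (hav b hb).2⟩))
    · intro w hw
      exact (hRverts w).2 (Or.inl ⟨hmem w hw, (hav w hw).1, (hav w hw).2⟩)
  have hpathP2 : ∀ {x y : ℕ} {p : List ℕ}, (∀ v ∈ p, v ≠ z) →
      R.IsPathFromTo x y p → N.IsPathFromTo x y p := by
    intro x y p hav hp
    obtain ⟨⟨hne, hch, hmem⟩, hh, hl⟩ := hp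
    refine ⟨⟨hne, ?_, ?_⟩, hh, hl⟩
    · refine chain'_imp_mem hch (fun a ha b hb hab => ?_)
      rcases (hRarcs a b).1 hab with ⟨hm, -⟩ | ⟨hbz, -⟩
      · exact hm
      · exact absurd hbz (hav b hb)
    · intro w hw
      rcases (hRverts w).1 (hmem w hw) with ⟨hwN, -⟩ | hwz
      · exact hwN
      · exact absurd hwz (hav w hw)
  have havoidSvS : ∀ {y : ℕ} {p : List ℕ}, y ∉ S → y ≠ vS → N.IsPathFromTo N.root y p →
      ∀ v ∈ p, v ∉ S ∧ v ≠ vS := by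
    intro y p hyS hyvS hp v hv
    have hSp : ∀ s' ∈ p, s' ∉ S := by
      intro s' hs' hS'
      exact path_avoid_sink hp (hSleaf s' hS').2 (fun h => hyS (h ▸ hS')) hs'
    refine ⟨hSp v hv, ?_⟩
    rintro rfl
    rcases mem_chain'_last_or_succ hp.1.2.1 hv hp.2.2 with h | ⟨w, hw, hrw⟩
    · exact hyvS h.symm
    · exact hSp w hw (houtchar w hrw)
  have havoidz : ∀ {y : ℕ} {p : List ℕ}, y ≠ z → R.IsPathFromTo R.root y p →
      ∀ v ∈ p, v ≠ z := by
    intro y p hyz hp v hv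
    rintro rfl
    exact path_avoid_sink hp hRoutdeg_z (fun h => hyz h.symm) hv
  have hreachroot : ∀ y ∈ X, ∃ p, N.IsPathFromTo N.root y p :=
    fun y hy => (reach_iff_path hA hrv).1 (reach_root hA hacyc hsrc y (hXV hy))
  have hdecompN : ∀ {p : List ℕ}, N.IsPathFromTo N.root z p →
      ∃ q, p = q ++ [vS, z] ∧ N.IsPathFromTo N.root u q := by
    intro p hp
    obtain ⟨q1, t1, hq1eq, hq1, ht1⟩ := path_unsnoc hp hrootz
    have ht1vS : t1 = vS := hparent hz ht1
    rw [ht1vS] at hq1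
    obtain ⟨q, t2, hqeq, hq, ht2⟩ := path_unsnoc hq1 hrootvS
    have ht2u : t2 = u := hu_uniq t2 ht2
    rw [ht2u] at hq
    refine ⟨q, ?_, hq⟩
    rw [hq1eq, hqeq, List.append_assoc]
    rfl
  have hdecompR : ∀ {p : List ℕ}, R.IsPathFromTo R.root z p →
      ∃ q t, p = q ++ [z] ∧ R.IsPathFromTo R.root t q ∧ (t, vS) ∈ N.arcs ∧
        ∀ w ∈ q, w ≠ z := by
    intro p hp
    have hrz : R.root ≠ z := by rw [hRroot]; exact hrootz
    obtain ⟨q, t, hqeq, hq, ht⟩ := path_unsnoc hp hrz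
    have htarc : (t, vS) ∈ N.arcs := by
      rcases (hRarcs t z).1 ht with ⟨-, -, -, hzS, -⟩ | ⟨-, hm, -, -⟩
      · exact absurd hz hzS
      · exact hm
    refine ⟨q, t, hqeq, hq, htarc, ?_⟩
    intro w hw
    rintro rfl
    rcases mem_chain'_last_or_succ hq.1.2.1 hw hq.2.2 with h | ⟨w', hw', hrw⟩
    · rw [← h] at htarc
      exact harcsS _ _ htarc hz
    · have := outdeg_pos_of_mem hrw
      rw [hRoutdeg_z] at this
      omega
  have hnoreach_S : ∀ {s' y : ℕ}, s' ∈ S → N.Reach s' y → s' = y :=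
    fun hs h => eq_of_outdeg_zero_reach (hSleaf _ hs).2 h
  have hnoreach_vS : ∀ {y : ℕ}, y ∉ S → y ≠ vS → ¬ N.Reach vS y := by
    intro y hyS hyvS h
    rcases Relation.ReflTransGen.cases_head h with h' | ⟨c, hc, hcy⟩
    · exact hyvS h'.symm
    · have hcS := houtchar c hc
      rw [hnoreach_S hcS hcy] at hcS
      exact hyS hcS
  have hRN2R : ∀ {a b : ℕ}, b ∉ S → b ≠ vS → N.Reach a b → R.Reach a b := by
    intro a b hbS hbvS h
    induction h using Relation.ReflTransGen.head_induction_on with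
    | refl => exact Relation.ReflTransGen.refl
    | head hac hcb ih =>
      rename_i a' c
      have hcS : c ∉ S := by
        intro h'
        exact hbS ((hnoreach_S h' hcb) ▸ h')
      have hcvS : c ≠ vS := by
        rintro rfl
        exact hnoreach_vS hbS hbvS hcb
      have ha'S : a' ∉ S := harcsS _ _ hac
      have ha'vS : a' ≠ vS := by
        rintro rfl
        exact hcS (houtchar c hac)
      exact Relation.ReflTransGen.head
        ((hRarcs a' c).2 (Or.inl ⟨hac, ha'S, ha'vS, hcS, hcvS⟩)) ih
  have hRN2RvS : ∀ {a : ℕ}, a ≠ vS → N.Reach a vS → R.Reach a z := by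
    intro a havS h
    rcases Relation.ReflTransGen.cases_tail h with h' | ⟨c, hac, hc⟩
    · exact absurd h'.symm havS
    · have hcS : c ∉ S := harcsS _ _ hc
      have hcvS : c ≠ vS := by
        rintro rfl
        exact hacyc c (Relation.TransGen.single hc)
      exact Relation.ReflTransGen.tail (hRN2R hcS hcvS hac)
        ((hRarcs c z).2 (Or.inr ⟨rfl, hc, hcS, hcvS⟩))
  have hRN2Rz : ∀ {a : ℕ}, a ∉ S → a ≠ vS → N.Reach a z → R.Reach a z := by
    intro a haS havS h
    have haz : a ≠ z := fun h' => haS (h' ▸ hz)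
    have hvSr : N.Reach a vS := by
      rcases Relation.ReflTransGen.cases_tail h with h' | ⟨c, hac, hc⟩
      · exact absurd h'.symm haz
      · rw [← hparent hz hc]
        exact hac
    exact hRN2RvS havS hvSr
  have hR2N' : ∀ {a b : ℕ}, a ≠ z → b ≠ z → R.Reach a b → N.Reach a b := by
    intro a b haz hbz h
    have hlift : N.Reach (rn z vS a) (rn z vS b) :=
      Relation.ReflTransGen.lift (p := N.ArcRel) (rn z vS) (fun a' b' h' => harc_g a' b' h') _ _ h
    have e1 : rn z vS a = a := by unfold rn; rw [if_neg haz]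
    have e2 : rn z vS b = b := by unfold rn; rw [if_neg hbz]
    rwa [e1, e2] at hlift
  have hR2Nz : ∀ {a : ℕ}, a ≠ z → R.Reach a z → N.Reach a z := by
    intro a haz h
    have hlift : N.Reach (rn z vS a) (rn z vS z) :=
      Relation.ReflTransGen.lift (p := N.ArcRel) (rn z vS) (fun a' b' h' => harc_g a' b' h') _ _ h
    have e1 : rn z vS a = a := by unfold rn; rw [if_neg haz]
    have e2 : rn z vS z = vS := by unfold rn; rw [if_pos rfl]
    rw [e1, e2] at hlift
    exact Relation.ReflTransGen.tail hlift (hvSarc z hz)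
  refine ⟨hphyR, hnestR, ?_⟩
  intro Y hY3 T
  have hYne : Y.Nonempty := by
    rw [← Finset.card_pos, hY3]; omega
  have hdispiff : (∀ y ∈ Y, y ∈ X ∧ y ∉ S.erase z) →
      ∀ T' : Net, (N.Displays Y T' ↔ R.Displays Y T') := by
    intro hYgood T'
    have hYS : ∀ y ∈ Y, y ≠ z → y ∉ S ∧ y ≠ vS := by
      intro y hy hyz
      refine ⟨fun h => (hYgood y hy).2 (Finset.mem_erase.2 ⟨hyz, h⟩),
        fun h => hvSnotX (h ▸ (hYgood y hy).1)⟩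
    by_cases hzY : z ∈ Y
    · -- case z ∈ Y
      obtain ⟨y0, hy0Y, hy0z⟩ : ∃ y0 ∈ Y, y0 ≠ z := by
        by_contra hcon
        push_neg at hcon
        have : Y ⊆ {z} := fun y hy => Finset.mem_singleton.2 (hcon y hy)
        have := Finset.card_le_card this
        rw [hY3, Finset.card_singleton] at this
        omega
      obtain ⟨hy0S, hy0vS⟩ := hYS y0 hy0Y hy0z
      obtain ⟨p0, hp0⟩ := hreachroot y0 (hYgood y0 hy0Y).1
      have hp0R : R.IsPathFromTo R.root y0 p0 := by
        rw [hRroot]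
        exact hpathP1 (havoidSvS hy0S hy0vS hp0) hp0
      have honNR : ∀ w, w ≠ vS → w ≠ z → N.OnAllRootPaths Y w → R.OnAllRootPaths Y w := by
        intro w hwvS hwz hw y hy p hp
        by_cases hyz : y = z
        · rw [hyz] at hp hy
          obtain ⟨q, t, hqeq, hq, htarc, hqz⟩ := hdecompR hp
          have hqN : N.IsPathFromTo N.root t q := by
            rw [← hRroot]
            exact hpathP2 hqz hq
          have hpN : N.IsPathFromTo N.root z ((q ++ [vS]) ++ [z]) :=
            path_snoc (path_snoc hqN htarc hvSv) (hvSarc z hz) hzV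
          have hwmem := hw z hy _ hpN
          rw [hqeq]
          rcases List.mem_append.1 hwmem with h | h
          · rcases List.mem_append.1 h with h' | h'
            · exact List.mem_append.2 (Or.inl h')
            · simp at h'
              exact absurd h' hwvS
          · simp at h
            exact absurd h hwz
        · have hpN : N.IsPathFromTo N.root y p := by
            rw [← hRroot]
            exact hpathP2 (havoidz hyz hp) hp
          exact hw y hy p hpN
      have honRN : ∀ w, w ≠ vS → w ≠ z → R.OnAllRootPaths Y w → N.OnAllRootPaths Y w := by
        intro w hwvS hwz hw y hy p hp
        by_cases hyz : y = z
        · rw [hyz] at hp hy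
          obtain ⟨q, hqeq, hq⟩ := hdecompN hp
          have hqR : R.IsPathFromTo R.root u q := by
            rw [hRroot]
            exact hpathP1 (havoidSvS huS huvS hq) hq
          have hpR : R.IsPathFromTo R.root z (q ++ [z]) :=
            path_snoc hqR ((hRarcs u z).2 (Or.inr ⟨rfl, hu, huS, huvS⟩)) hznR
          have hwmem := hw z hy _ hpR
          rw [hqeq]
          rcases List.mem_append.1 hwmem with h | h
          · exact List.mem_append.2 (Or.inl h)
          · simp at h
            exact absurd h hwz
        · obtain ⟨hyS, hyvS⟩ := hYS y hy hyz
          have hpR : R.IsPathFromTo R.root y p := by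
            rw [hRroot]
            exact hpathP1 (havoidSvS hyS hyvS hp) hp
          exact hw y hy p hpR
      have hLCAiff : ∀ v, N.IsLCA Y v ↔ R.IsLCA Y v := by
        intro v
        constructor
        · rintro ⟨hvV, hvY, hvon, hvmax⟩
          have hvz : v ≠ z := fun h => hvY (h ▸ hzY)
          obtain ⟨hvS', hvvS⟩ := havoidSvS hy0S hy0vS hp0 v (hvon y0 hy0Y p0 hp0)
          refine ⟨(hRverts v).2 (Or.inl ⟨hvV, hvS', hvvS⟩), hvY,
            honNR v hvvS hvz hvon, ?_⟩
          intro w hwR hwY hwon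
          have hwz : w ≠ z := fun h => hwY (h ▸ hzY)
          rcases (hRverts w).1 hwR with ⟨hwN, hwS, hwvS⟩ | hwzz
          · exact hRN2R hvS' hvvS (hvmax w hwN hwY (honRN w hwvS hwz hwon))
          · exact absurd hwzz hwz
        · rintro ⟨hvR, hvY, hvon, hvmax⟩
          have hvz : v ≠ z := fun h => hvY (h ▸ hzY)
          have hv3 : v ∈ N.verts ∧ v ∉ S ∧ v ≠ vS := by
            rcases (hRverts v).1 hvR with h | h
            · exact h
            · exact absurd h hvz
          obtain ⟨hvV, hvS', hvvS⟩ := hv3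
          refine ⟨hvV, hvY, honRN v hvvS hvz hvon, ?_⟩
          intro w hwN hwY hwon
          have hwz : w ≠ z := fun h => hwY (h ▸ hzY)
          have hwvS : w ≠ vS := by
            rintro rfl
            exact (havoidSvS hy0S hy0vS hp0 w (hwon y0 hy0Y p0 hp0)).2 rfl
          have hwS : w ∉ S :=
            (havoidSvS hy0S hy0vS hp0 w (hwon y0 hy0Y p0 hp0)).1
          exact hR2N' hwz hvz
            (hvmax w ((hRverts w).2 (Or.inl ⟨hwN, hwS, hwvS⟩)) hwY
              (honNR w hwvS hwz hwon))
      -- the key suppression step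
      have hstep : ∀ v, N.IsLCA Y v →
          SuppStep (N.restrictTo v Y) (R.restrictTo v Y) := by
        intro v hlca
        obtain ⟨hvV, hvY, hvon, hvmax⟩ := hlca
        have hvz : v ≠ z := fun h => hvY (h ▸ hzY)
        obtain ⟨hvS', hvvS⟩ := havoidSvS hy0S hy0vS hp0 v (hvon y0 hy0Y p0 hp0)
        obtain ⟨pz, hpz⟩ := hreachroot z (hSX hz)
        obtain ⟨q, hqeq, hq⟩ := hdecompN hpz
        have hvinq : v ∈ q := by
          have := hvon z hzY pz hpz
          rw [hqeq] at this
          rcases List.mem_append.1 this with h | h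
          · exact h
          · simp at h
            rcases h with h | h
            · exact absurd h hvvS
            · exact absurd h hvz
        have hvru : N.Reach v u := reach_of_mem_chain' hq.1.2.1 hvinq hq.2.2
        have hvrvS : N.Reach v vS := Relation.ReflTransGen.tail hvru hu
        have hvrz : N.Reach v z := Relation.ReflTransGen.tail hvrvS (hvSarc z hz)
        have hYScond : ∀ y ∈ Y, y ∈ S → y = z := by
          intro y hy hyS
          by_contra hyz
          exact (hYS y hy hyz).1 hyS
        have c1 : (u, vS) ∈ (N.restrictTo v Y).arcs :=
          Finset.mem_filter.2 ⟨hu, hvru, z, hzY, Relation.ReflTransGen.single (hvSarc z hz)⟩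
        have c2 : (vS, z) ∈ (N.restrictTo v Y).arcs :=
          Finset.mem_filter.2 ⟨hvSarc z hz, hvrvS, z, hzY, Relation.ReflTransGen.refl⟩
        refine ⟨u, vS, z, c1, c2, ?_, ?_, ?_, ?_, rfl⟩
        · -- indeg vS = 1 in the restriction
          have hf : (N.restrictTo v Y).arcs.filter (fun a => a.2 = vS) = {(u, vS)} := by
            ext ⟨a1, a2⟩
            simp only [Finset.mem_filter, Finset.mem_singleton, Prod.mk.injEq]
            constructor
            · rintro ⟨hm, heq⟩
              exact ⟨hu_uniq a1 (by rw [← heq]; exact (Finset.mem_filter.1 hm).1), heq⟩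
            · rintro ⟨ha, hb⟩
              rw [ha, hb]
              exact ⟨c1, rfl⟩
          unfold indeg
          rw [hf, Finset.card_singleton]
        · have hf : (N.restrictTo v Y).arcs.filter (fun a => a.1 = vS) = {(vS, z)} := by
            ext ⟨a1, a2⟩
            simp only [Finset.mem_filter, Finset.mem_singleton, Prod.mk.injEq]
            constructor
            · rintro ⟨hm, heq⟩
              obtain ⟨hm', -, y, hy, hby⟩ := Finset.mem_filter.1 hm
              rw [heq] at hm'
              have ha2S : a2 ∈ S := houtchar a2 hm'
              have : a2 = y := hnoreach_S ha2S hby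
              exact ⟨heq, by rw [this]; exact hYScond y hy (this ▸ ha2S)⟩
            · rintro ⟨ha, hb⟩
              rw [ha, hb]
              exact ⟨c2, rfl⟩
          unfold outdeg
          rw [hf, Finset.card_singleton]
        · -- verts of the reduced restriction
          ext w
          rw [Finset.mem_erase]
          show w ∈ R.verts.filter _ ↔ _ ∧ w ∈ N.verts.filter _
          simp only [Finset.mem_filter]
          constructor
          · rintro ⟨hwR, hwreach, y, hy, hwy⟩
            rcases (hRverts w).1 hwR with ⟨hwN, hwS, hwvS⟩ | hwzz
            · have hwz : w ≠ z := fun h => hwS (h ▸ hz)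
              refine ⟨hwvS, hwN, hR2N' hvz hwz hwreach, y, hy, ?_⟩
              by_cases hyz : y = z
              · rw [hyz] at hwy ⊢
                exact hR2Nz hwz hwy
              · exact hR2N' hwz hyz hwy
            · rw [hwzz]
              exact ⟨hzvS, hzV, hvrz, z, hzY, Relation.ReflTransGen.refl⟩
          · rintro ⟨hwvS, hwN, hwreach, y, hy, hwy⟩
            by_cases hwS : w ∈ S
            · have hwy' : w = y := hnoreach_S hwS hwy
              have hwz : w = z := by rw [hwy']; exact hYScond y hy (hwy' ▸ hwS)
              rw [hwz]
              exact ⟨hznR, hRN2Rz hvS' hvvS (hwz ▸ hwreach), z, hzY,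
                Relation.ReflTransGen.refl⟩
            · have hwz : w ≠ z := fun h => hwS (h ▸ hz)
              refine ⟨(hRverts w).2 (Or.inl ⟨hwN, hwS, hwvS⟩),
                hRN2R hwS hwvS hwreach, y, hy, ?_⟩
              by_cases hyz : y = z
              · rw [hyz] at hwy ⊢
                exact hRN2Rz hwS hwvS hwy
              · obtain ⟨hyS, hyvS⟩ := hYS y hy hyz
                exact hRN2R hyS hyvS hwy
        · -- arcs of the reduced restriction
          ext ⟨a1, a2⟩
          constructor
          · intro hmem
            have hmem0 : (a1, a2) ∈ R.arcs ∧ R.Reach v a1 ∧ ∃ y ∈ Y, R.Reach a2 y :=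
              Finset.mem_filter.1 hmem
            obtain ⟨haR, hreach, y, hy, hby⟩ := hmem0
            rcases (hRarcs a1 a2).1 haR with ⟨hm, h1S, h1vS, h2S, h2vS⟩ |
              ⟨h2z, hm', h1S, h1vS⟩
            · have h1z : a1 ≠ z := fun h => h1S (h ▸ hz)
              have h2z : a2 ≠ z := fun h => h2S (h ▸ hz)
              refine Finset.mem_insert.2 (Or.inr (Finset.mem_erase.2 ⟨?_,
                Finset.mem_erase.2 ⟨?_, Finset.mem_filter.2
                  ⟨hm, hR2N' hvz h1z hreach, y, hy, ?_⟩⟩⟩))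
              · rw [Ne, Prod.mk.injEq]; rintro ⟨h, -⟩; exact h1vS h
              · rw [Ne, Prod.mk.injEq]; rintro ⟨-, h⟩; exact h2vS h
              · by_cases hyz : y = z
                · rw [hyz] at hby ⊢
                  exact hR2Nz h2z hby
                · exact hR2N' h2z hyz hby
            · refine Finset.mem_insert.2 (Or.inl ?_)
              rw [Prod.mk.injEq]
              exact ⟨hu_uniq a1 hm', h2z⟩
          · intro hmem
            rcases Finset.mem_insert.1 hmem with heq | hmem1
            · rw [Prod.mk.injEq] at heq
              rw [heq.1, heq.2]
              exact Finset.mem_filter.2 ⟨(hRarcs u z).2 (Or.inr ⟨rfl, hu, huS, huvS⟩),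
                hRN2R huS huvS hvru, z, hzY, Relation.ReflTransGen.refl⟩
            · obtain ⟨hne2, hmem2⟩ := Finset.mem_erase.1 hmem1
              obtain ⟨hne1, hmem3⟩ := Finset.mem_erase.1 hmem2
              have hmem4 : (a1, a2) ∈ N.arcs ∧ N.Reach v a1 ∧ ∃ y ∈ Y, N.Reach a2 y :=
                Finset.mem_filter.1 hmem3
              obtain ⟨hm, hreach, y, hy, hby⟩ := hmem4
              have h2vS : a2 ≠ vS := by
                intro h
                apply hne1
                rw [h] at hm ⊢
                rw [hu_uniq a1 hm]
              have h2S : a2 ∉ S := by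
                intro h
                have h2y : a2 = y := hnoreach_S h hby
                have h2z : a2 = z := by rw [h2y]; exact hYScond y hy (h2y ▸ h)
                apply hne2
                rw [h2z] at hm ⊢
                rw [hparent hz hm]
              have h1vS : a1 ≠ vS := by
                intro h
                apply h2S
                rw [h] at hm
                exact houtchar a2 hm
              have h1S : a1 ∉ S := harcsS _ _ hm
              have h1z : a1 ≠ z := fun h => h1S (h ▸ hz)
              have h2z : a2 ≠ z := fun h => h2S (h ▸ hz)
              refine Finset.mem_filter.2 ⟨(hRarcs a1 a2).2
                (Or.inl ⟨hm, h1S, h1vS, h2S, h2vS⟩),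
                hRN2R h1S h1vS hreach, y, hy, ?_⟩
              by_cases hyz : y = z
              · rw [hyz] at hby ⊢
                exact hRN2Rz h2S h2vS hby
              · obtain ⟨hyS, hyvS⟩ := hYS y hy hyz
                exact hRN2R hyS hyvS hby
      constructor
      · rintro ⟨v, hlca, T0, hsup, hiso⟩
        exact ⟨v, (hLCAiff v).1 hlca, T0,
          suppresses_of_step (hInvRes v Y) (hstep v hlca) hsup, hiso⟩
      · rintro ⟨v, hlca, T0, hsup, hiso⟩
        have hlcaN := (hLCAiff v).2 hlca
        exact ⟨v, hlcaN, T0, suppresses_head (hstep v hlcaN) hsup, hiso⟩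
    · -- case z ∉ Y : the two restrictions agree
      have hYS' : ∀ y ∈ Y, y ∉ S ∧ y ≠ vS :=
        fun y hy => hYS y hy (fun h => hzY (h ▸ hy))
      have honNR : ∀ w, N.OnAllRootPaths Y w → R.OnAllRootPaths Y w := by
        intro w hw y hy p hp
        have hyz : y ≠ z := fun h => hzY (h ▸ hy)
        have hpN : N.IsPathFromTo N.root y p := by
          rw [← hRroot]
          exact hpathP2 (havoidz hyz hp) hp
        exact hw y hy p hpN
      have honRN : ∀ w, R.OnAllRootPaths Y w → N.OnAllRootPaths Y w := by
        intro w hw y hy p hp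
        obtain ⟨hyS, hyvS⟩ := hYS' y hy
        have hpR : R.IsPathFromTo R.root y p := by
          rw [hRroot]
          exact hpathP1 (havoidSvS hyS hyvS hp) hp
        exact hw y hy p hpR
      obtain ⟨y0, hy0Y⟩ := hYne
      obtain ⟨hy0S, hy0vS⟩ := hYS' y0 hy0Y
      obtain ⟨p0, hp0⟩ := hreachroot y0 (hYgood y0 hy0Y).1
      have hp0R : R.IsPathFromTo R.root y0 p0 := by
        rw [hRroot]
        exact hpathP1 (havoidSvS hy0S hy0vS hp0) hp0
      have hgoodw : ∀ w, N.OnAllRootPaths Y w → w ∉ S ∧ w ≠ vS :=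
        fun w hw => havoidSvS hy0S hy0vS hp0 w (hw y0 hy0Y p0 hp0)
      have hz_not_onpath : ∀ v ∈ p0, v ∉ S ∧ v ≠ vS := havoidSvS hy0S hy0vS hp0
      have hLCAiff : ∀ v, N.IsLCA Y v ↔ R.IsLCA Y v := by
        intro v
        constructor
        · rintro ⟨hvV, hvY, hvon, hvmax⟩
          obtain ⟨hvS', hvvS⟩ := hgoodw v hvon
          refine ⟨(hRverts v).2 (Or.inl ⟨hvV, hvS', hvvS⟩), hvY, honNR v hvon, ?_⟩
          intro w hwR hwY hwon
          rcases (hRverts w).1 hwR with ⟨hwN, hwS, hwvS⟩ | hwzz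
          · exact hRN2R hvS' hvvS (hvmax w hwN hwY (honRN w hwon))
          · exfalso
            have := hwon y0 hy0Y p0 hp0R
            rw [hwzz] at this
            exact (hz_not_onpath z this).1 hz
        · rintro ⟨hvR, hvY, hvon, hvmax⟩
          have hvz : v ≠ z := by
            intro h
            rw [h] at hvon
            exact (hz_not_onpath z (hvon y0 hy0Y p0 hp0R)).1 hz
          have hv3 : v ∈ N.verts ∧ v ∉ S ∧ v ≠ vS := by
            rcases (hRverts v).1 hvR with h | h
            · exact h
            · exact absurd h hvz
          obtain ⟨hvV, hvS', hvvS⟩ := hv3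
          refine ⟨hvV, hvY, honRN v hvon, ?_⟩
          intro w hwN hwY hwon
          obtain ⟨hwS, hwvS⟩ := hgoodw w hwon
          have hwz : w ≠ z := fun h => hwS (h ▸ hz)
          exact hR2N' hwz hvz
            (hvmax w ((hRverts w).2 (Or.inl ⟨hwN, hwS, hwvS⟩)) hwY (honNR w hwon))
      have hres : ∀ v, v ∉ S → v ≠ vS → N.restrictTo v Y = R.restrictTo v Y := by
        intro v hvS' hvvS
        have hvz : v ≠ z := fun h => hvS' (h ▸ hz)
        have hkeyW : ∀ w y, y ∈ Y → N.Reach w y → w ∉ S ∧ w ≠ vS := by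
          intro w y hy hr
          obtain ⟨hyS, hyvS⟩ := hYS' y hy
          constructor
          · intro h
            exact hyS ((hnoreach_S h hr) ▸ h)
          · rintro rfl
            exact hnoreach_vS hyS hyvS hr
        refine net_ext ?_ ?_ rfl
        · ext w
          show w ∈ N.verts.filter _ ↔ w ∈ R.verts.filter _
          simp only [Finset.mem_filter]
          constructor
          · rintro ⟨hwN, hwreach, y, hy, hwy⟩
            obtain ⟨hwS, hwvS⟩ := hkeyW w y hy hwy
            obtain ⟨hyS, hyvS⟩ := hYS' y hy
            exact ⟨(hRverts w).2 (Or.inl ⟨hwN, hwS, hwvS⟩), hRN2R hwS hwvS hwreach,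
              y, hy, hRN2R hyS hyvS hwy⟩
          · rintro ⟨hwR, hwreach, y, hy, hwy⟩
            have hyz : y ≠ z := fun h => hzY (h ▸ hy)
            have hwz : w ≠ z := by
              rintro rfl
              have := eq_of_outdeg_zero_reach hRoutdeg_z hwy
              exact hyz this.symm
            rcases (hRverts w).1 hwR with ⟨hwN, -, -⟩ | hwzz
            · exact ⟨hwN, hR2N' hvz hwz hwreach, y, hy, hR2N' hwz hyz hwy⟩
            · exact absurd hwzz hwz
        · ext ⟨a1, a2⟩
          show (a1, a2) ∈ N.arcs.filter _ ↔ (a1, a2) ∈ R.arcs.filter _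
          simp only [Finset.mem_filter]
          constructor
          · rintro ⟨hm, hreach, y, hy, hby⟩
            obtain ⟨h2S, h2vS⟩ := hkeyW a2 y hy hby
            have h1S : a1 ∉ S := harcsS _ _ hm
            have h1vS : a1 ≠ vS := by
              rintro rfl
              exact h2S (houtchar a2 hm)
            obtain ⟨hyS, hyvS⟩ := hYS' y hy
            exact ⟨(hRarcs a1 a2).2 (Or.inl ⟨hm, h1S, h1vS, h2S, h2vS⟩),
              hRN2R h1S h1vS hreach, y, hy, hRN2R hyS hyvS hby⟩
          · rintro ⟨haR, hreach, y, hy, hby⟩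
            have hyz : y ≠ z := fun h => hzY (h ▸ hy)
            rcases (hRarcs a1 a2).1 haR with ⟨hm, h1S, h1vS, h2S, h2vS⟩ | ⟨h2z, -, -, -⟩
            · have h1z : a1 ≠ z := fun h => h1S (h ▸ hz)
              have h2z : a2 ≠ z := fun h => h2S (h ▸ hz)
              exact ⟨hm, hR2N' hvz h1z hreach, y, hy, hR2N' h2z hyz hby⟩
            · exfalso
              rw [h2z] at hby
              exact hyz (eq_of_outdeg_zero_reach hRoutdeg_z hby).symm
      constructor
      · rintro ⟨v, hlca, T0, hsup, hiso⟩
        obtain ⟨hvS', hvvS⟩ := hgoodw v hlca.2.2.1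
        refine ⟨v, (hLCAiff v).1 hlca, T0, ?_, hiso⟩
        rw [← hres v hvS' hvvS]
        exact hsup
      · rintro ⟨v, hlca, T0, hsup, hiso⟩
        have hlcaN := (hLCAiff v).2 hlca
        obtain ⟨hvS', hvvS⟩ := hgoodw v hlcaN.2.2.1
        refine ⟨v, hlcaN, T0, ?_, hiso⟩
        rw [hres v hvS' hvvS]
        exact hsup
  constructor
  · rintro ⟨hYsub, hdisp⟩
    have hYgood : ∀ y ∈ Y, y ∈ X ∧ y ∉ S.erase z := by
      intro y hy
      exact Finset.mem_sdiff.1 (hYsub hy)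
    refine ⟨fun y hy => (hYgood y hy).1, (hdispiff hYgood T).2 hdisp, ?_⟩
    have hsub : S ∩ Y ⊆ {z} := by
      intro s' hs'
      obtain ⟨hs1, hs2⟩ := Finset.mem_inter.1 hs'
      rcases eq_or_ne s' z with h | h
      · simp [h]
      · exact absurd (Finset.mem_erase.2 ⟨h, hs1⟩) (hYgood s' hs2).2
    rcases Finset.subset_singleton_iff.1 hsub with h | h
    · exact Or.inl h
    · exact Or.inr h
  · rintro ⟨hYX, hdisp, hcond⟩
    have hYgood : ∀ y ∈ Y, y ∈ X ∧ y ∉ S.erase z := by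
      intro y hy
      refine ⟨hYX hy, fun hB => ?_⟩
      have : y ∈ S ∩ Y := Finset.mem_inter.2 ⟨Finset.mem_of_mem_erase hB, hy⟩
      rcases hcond with h | h
      · rw [h] at this; simp at this
      · rw [h] at this
        exact (Finset.mem_erase.1 hB).1 (Finset.mem_singleton.1 this)
    exact ⟨fun y hy => Finset.mem_sdiff.2 (hYgood y hy), (hdispiff hYgood T).1 hdisp⟩

end Net

/-- let `N` be a 1-nested phylogenetic network on `X`, `|X| ≥ 3`,
let `S ≠ X` be a cherry of `N` and `z ∈ S`.  If `S` is isolated, the isolated cherry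
reduction (at the cherry vertex `vS`) is a 1-nested phylogenetic network on
`X - (S - {z})`; otherwise the cherry reduction is; and in either case the displayed
trinets of the result are exactly the displayed trinets of `N` whose leaf set meets
`S` in `∅` or in `{z}`. -/
theorem cherry_reduction_props (N : Net) (X : Finset ℕ)
    (hphy : N.IsPhyloNet X) (hnest : N.OneNested) (hX : 3 ≤ X.card)
    (S : Finset ℕ) (hch : N.IsCherry X S) (z : ℕ) (hz : z ∈ S) (hSX : S ≠ X) :
    (N.IsIsolatedCherry X S →
      ∀ vS : ℕ, N.IsCherryVert X S vS → N.outdeg vS = S.card → N.indeg vS = 1 →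
        (N.isoCherryRed S z vS).IsPhyloNet (X \ S.erase z) ∧
        (N.isoCherryRed S z vS).OneNested ∧
        ∀ Y : Finset ℕ, Y.card = 3 → ∀ T : Net,
          ((Y ⊆ X \ S.erase z ∧ (N.isoCherryRed S z vS).Displays Y T) ↔
            (Y ⊆ X ∧ N.Displays Y T ∧ (S ∩ Y = ∅ ∨ S ∩ Y = {z})))) ∧
    (¬ N.IsIsolatedCherry X S →
      (N.cherryRed S z).IsPhyloNet (X \ S.erase z) ∧
      (N.cherryRed S z).OneNested ∧
      ∀ Y : Finset ℕ, Y.card = 3 → ∀ T : Net,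
        ((Y ⊆ X \ S.erase z ∧ (N.cherryRed S z).Displays Y T) ↔
          (Y ⊆ X ∧ N.Displays Y T ∧ (S ∩ Y = ∅ ∨ S ∩ Y = {z})))) := by
  constructor
  · intro _ vS hvS houtd hind
    exact Net.isoCherryRed_all hphy hnest hch.1 hch.2.1 hz hvS.1 hvS.2.1 houtd hind
  · intro hniso
    exact Net.cherryRed_all hphy hnest hch hz hniso
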